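/- arXiv:0902.4305 — 5 statements merged into one kernel-verified Lean document; each statement's English description precedes it below -/
import Mathlib

section
/- Let μ be the counting measure on ℤ^n ⊂ ℝ^n, and let C > 0 be a constant such that the weak (1,1) maximal inequality L' · vol{x ∈ ℝ^n : Mν(x) > L'} ≤ C · ν(ℝ^n) holds for every finite positive Borel measure ν on ℝ^n and every L' > 0. Then for every L > 1, L · vol({x ∈ [0,1]^n : Mμ(x) > L}) ≤ C. -/
/-!
Since `μ(Q(x,r)) ≤ (2r+1)^n < L (2r)^n` for large `r`, only cubes of radius at most some `ρ`
can witness `Mμ(x) > L`. Let `A = {x ∈ [0,1]^n : Mμ(x) > L}` and let `ν` be `μ` restricted to a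
cube of side `N + 1 + 2ρ` containing the translates `A + k`, `k ∈ {0,…,N}^n`. By the lattice
invariance of `μ`, the witnessing cubes around the points of `A + k` carry the same `ν`-mass, so
`{Mν > L}` contains these `(N+1)^n` translates, which are disjoint up to null sets. The weak (1,1)
inequality for `ν` gives `(N+1)^n L vol(A) ≤ C (N + 2ρ + 2)^n`, and `N → ∞` yields the claim.
-/

open MeasureTheory Metric Filter ProbabilityTheory
open scoped ENNReal NNReal

/-- The cubic centered Hardy--Littlewood maximal function of a measure `μ` on `ℝ^n`
(with the sup norm, so that `Metric.closedBall x r` is the cube `Q(x,r)` of center `x`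
and edge length `2r`). -/
noncomputable def maximalFn {n : ℕ} (μ : Measure (Fin n → ℝ)) (x : Fin n → ℝ) : ℝ≥0∞ :=
  ⨆ (r : ℝ) (_ : 0 < r), μ (closedBall x r) / volume (closedBall x r)


/-- The counting measure on the integer lattice `ℤ^n ⊂ ℝ^n`:
`μ(A) = card (A ∩ ℤ^n)`. -/
noncomputable def latticeMeasure (n : ℕ) : Measure (Fin n → ℝ) :=
  Measure.sum fun k : Fin n → ℤ => Measure.dirac fun i => (k i : ℝ)

open Function

lemma card_Icc_ceil_floor_le {a b : ℝ} (hab : a ≤ b) :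
    ((Finset.Icc ⌈a⌉ ⌊b⌋).card : ℝ) ≤ b - a + 1 := by
  rw [Int.card_Icc, ← Int.cast_natCast, Int.toNat_eq_max, Int.cast_max]
  push_cast
  exact max_le (by linarith [Int.floor_le b, Int.le_ceil a]) (by linarith)

lemma eventually_add_one_pow_le_mul_pow (n : ℕ) {L : ℝ} (hL : 1 < L) :
    ∀ᶠ t : ℝ in atTop, (t + 1) ^ n ≤ L * t ^ n := by
  have hlim : Tendsto (fun t : ℝ => (1 + t⁻¹) ^ n) atTop (nhds 1) := by
    simpa using ((tendsto_inv_atTop_zero (𝕜 := ℝ)).const_add 1).pow n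
  filter_upwards [hlim.eventually_lt_const hL, eventually_gt_atTop 0] with t hlt ht
  calc (t + 1) ^ n = (1 + t⁻¹) ^ n * t ^ n := by rw [← mul_pow]; field_simp
    _ ≤ L * t ^ n := by gcongr

lemma le_of_forall_mul_pow_le {a b c : ℝ} (n : ℕ)
    (h : ∀ N : ℕ, a * (N + 1) ^ n ≤ b * (N + c) ^ n) : a ≤ b := by
  have hlim :
      Tendsto (fun N : ℕ => b * (1 + (c - 1) * (1 / ((N : ℝ) + 1))) ^ n) atTop (nhds b) := by
    simpa using
      (((tendsto_one_div_add_atTop_nhds_zero_nat.const_mul (c - 1)).const_add 1).pow n).const_mul b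
  refine ge_of_tendsto' hlim fun N => ?_
  rw [show 1 + (c - 1) * (1 / ((N : ℝ) + 1)) = (N + c) / (N + 1) by field_simp; ring, div_pow,
    mul_div_assoc', le_div_iff₀ (by positivity)]
  exact h N

lemma sum_measure_inter_le {α ι : Type*} [MeasurableSpace α] (μ : Measure α) {U : ι → Set α}
    (hU : ∀ i, MeasurableSet (U i)) (hd : Pairwise (Disjoint on U)) (T : Finset ι) (S : Set α) :
    ∑ i ∈ T, μ (S ∩ U i) ≤ μ S :=
  calc ∑ i ∈ T, μ (S ∩ U i) = μ.restrict (⋃ i ∈ T, U i) S := by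
        rw [Measure.restrict_biUnion_finset (hd.set_pairwise _) hU, Measure.sum_fintype,
          Measure.coe_finsetSum, Finset.sum_apply, ← Finset.sum_coe_sort T]
        simp only [Measure.restrict_apply' (hU _)]
    _ ≤ μ S := Measure.restrict_apply_le _ _

def latticePoint {n : ℕ} (k : Fin n → ℤ) : Fin n → ℝ := fun i => k i

@[simp]
lemma latticePoint_apply {n : ℕ} (k : Fin n → ℤ) (i : Fin n) : latticePoint k i = k i := rfl

lemma latticePoint_add {n : ℕ} (k m : Fin n → ℤ) :
    latticePoint (k + m) = latticePoint k + latticePoint m := by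
  ext i; simp

lemma latticeMeasure_apply {n : ℕ} {s : Set (Fin n → ℝ)} (hs : MeasurableSet s) :
    latticeMeasure n s = ∑' k, s.indicator 1 (latticePoint k) := by
  rw [latticeMeasure, Measure.sum_apply _ hs]
  exact tsum_congr fun k => Measure.dirac_apply' _ hs

lemma latticeMeasure_le_card {n : ℕ} {s : Set (Fin n → ℝ)} (hs : MeasurableSet s)
    (F : Finset (Fin n → ℤ)) (hF : ∀ k, latticePoint k ∈ s → k ∈ F) :
    latticeMeasure n s ≤ F.card := by
  rw [latticeMeasure_apply hs, tsum_eq_sum fun k hk => Set.indicator_of_notMem (mt (hF k) hk) _]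
  calc ∑ k ∈ F, s.indicator 1 (latticePoint k) ≤ ∑ _k ∈ F, (1 : ℝ≥0∞) :=
        Finset.sum_le_sum fun k _ => Set.indicator_le_self' (fun _ _ => zero_le_one) _
    _ = F.card := by simp

lemma latticeMeasure_closedBall_le {n : ℕ} (x : Fin n → ℝ) {r : ℝ} (hr : 0 ≤ r) :
    latticeMeasure n (closedBall x r) ≤ ENNReal.ofReal ((2 * r + 1) ^ n) := by
  let F := Fintype.piFinset fun i => Finset.Icc ⌈x i - r⌉ ⌊x i + r⌋
  have hF : ∀ k, latticePoint k ∈ closedBall x r → k ∈ F := by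
    intro k hk
    simp only [F, Fintype.mem_piFinset, Finset.mem_Icc, Int.ceil_le, Int.le_floor]
    intro i
    have := abs_le.1 (by simpa [Real.dist_eq] using (dist_pi_le_iff hr).1 (mem_closedBall.1 hk) i)
    constructor <;> linarith
  calc latticeMeasure n (closedBall x r) ≤ F.card :=
        latticeMeasure_le_card measurableSet_closedBall F hF
    _ = ENNReal.ofReal (∏ i, ((Finset.Icc ⌈x i - r⌉ ⌊x i + r⌋).card : ℝ)) := by
        rw [Fintype.card_piFinset, ← ENNReal.ofReal_natCast]; push_cast; rfl
    _ ≤ ENNReal.ofReal ((2 * r + 1) ^ n) := by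
        refine ENNReal.ofReal_le_ofReal ?_
        calc ∏ i, ((Finset.Icc ⌈x i - r⌉ ⌊x i + r⌋).card : ℝ) ≤ ∏ _i : Fin n, (2 * r + 1) :=
              Finset.prod_le_prod (fun _ _ => by positivity)
                fun i _ => (card_Icc_ceil_floor_le (by linarith)).trans_eq (by ring)
          _ = (2 * r + 1) ^ n := by simp

lemma latticeMeasure_closedBall_add {n : ℕ} (x : Fin n → ℝ) (k : Fin n → ℤ) (r : ℝ) :
    latticeMeasure n (closedBall (x + latticePoint k) r) = latticeMeasure n (closedBall x r) := by
  simp only [latticeMeasure_apply measurableSet_closedBall]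
  refine ((Equiv.addRight k).tsum_eq _).symm.trans (tsum_congr fun m => ?_)
  simp only [Equiv.coe_addRight, latticePoint_add, Set.indicator, mem_closedBall, dist_add_right,
    Pi.one_apply]

def unitCell {n : ℕ} (k : Fin n → ℤ) : Set (Fin n → ℝ) :=
  Set.univ.pi fun i => Set.Ico (k i : ℝ) (k i + 1)

lemma measurableSet_unitCell {n : ℕ} (k : Fin n → ℤ) : MeasurableSet (unitCell k) :=
  MeasurableSet.univ_pi fun _ => measurableSet_Ico

lemma pairwise_disjoint_unitCell (n : ℕ) : Pairwise (Disjoint on (unitCell (n := n))) := by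
  intro k m hkm
  refine Set.disjoint_left.2 fun y hk hm => hkm (funext fun i => ?_)
  rw [← Int.floor_eq_iff.2 (hk i trivial), ← Int.floor_eq_iff.2 (hm i trivial)]

lemma add_latticePoint_mem_unitCell {n : ℕ} {x : Fin n → ℝ} (hx : x ∈ unitCell 0)
    (k : Fin n → ℤ) : x + latticePoint k ∈ unitCell k := by
  intro i _
  have := hx i trivial
  simp only [Pi.zero_apply, Int.cast_zero, zero_add, Set.mem_Ico] at this
  simp only [Pi.add_apply, latticePoint_apply, Set.mem_Ico]
  constructor <;> linarith

lemma volume_inter_unitCell_zero {n : ℕ} {A : Set (Fin n → ℝ)} (hA : A ⊆ Set.Icc 0 1) :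
    volume (A ∩ unitCell 0) = volume A := by
  have hcell : unitCell (0 : Fin n → ℤ) =ᵐ[volume] Set.Icc 0 1 := by
    simpa [unitCell, volume_pi] using Measure.univ_pi_Ico_ae_eq_Icc (μ := fun _ : Fin n => volume)
      (f := (0 : Fin n → ℝ)) (g := 1)
  rw [measure_congr ((ae_eq_refl A).inter hcell), Set.inter_eq_left.2 hA]

lemma lt_maximalFn_iff {n : ℕ} {ν : Measure (Fin n → ℝ)} {x : Fin n → ℝ} {a : ℝ≥0∞} :
    a < maximalFn ν x ↔ ∃ r, 0 < r ∧ a * volume (closedBall x r) < ν (closedBall x r) := by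
  simp only [maximalFn, lt_iSup_iff, exists_prop]
  exact exists_congr fun r => and_congr_right fun hr =>
    ENNReal.lt_div_iff_mul_lt (Or.inl (measure_closedBall_pos volume x hr).ne')
      (Or.inl measure_closedBall_lt_top.ne)

lemma exists_radius_bound_of_lt_maximalFn_latticeMeasure (n : ℕ) {L : ℝ} (hL : 1 < L) :
    ∃ ρ, 0 ≤ ρ ∧ ∀ x : Fin n → ℝ, ENNReal.ofReal L < maximalFn (latticeMeasure n) x →
      ∃ r, 0 < r ∧ r ≤ ρ ∧
        ENNReal.ofReal L * volume (closedBall x r) < latticeMeasure n (closedBall x r) := by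
  obtain ⟨ρ, hρ⟩ := eventually_atTop.1 <|
    ((tendsto_id.const_mul_atTop two_pos).eventually
      (eventually_add_one_pow_le_mul_pow n hL)).and (eventually_ge_atTop 0)
  refine ⟨ρ, (hρ ρ le_rfl).2, fun x hx => ?_⟩
  obtain ⟨r, hr, hlt⟩ := lt_maximalFn_iff.1 hx
  refine ⟨r, hr, le_of_not_gt fun hρr => hlt.not_ge ?_, hlt⟩
  calc latticeMeasure n (closedBall x r) ≤ ENNReal.ofReal ((2 * r + 1) ^ n) :=
        latticeMeasure_closedBall_le x hr.le
    _ ≤ ENNReal.ofReal (L * (2 * r) ^ n) := ENNReal.ofReal_le_ofReal (hρ r hρr.le).1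
    _ = ENNReal.ofReal L * volume (closedBall x r) := by
        rw [ENNReal.ofReal_mul (by linarith), Real.volume_pi_closedBall x hr.le, Fintype.card_fin]

lemma lt_maximalFn_restrict_add_latticePoint {n : ℕ} {L : ℝ} {x : Fin n → ℝ} {r : ℝ}
    (hr : 0 < r)
    (hx : ENNReal.ofReal L * volume (closedBall x r) < latticeMeasure n (closedBall x r))
    (k : Fin n → ℤ) {B : Set (Fin n → ℝ)} (hB : closedBall (x + latticePoint k) r ⊆ B) :
    ENNReal.ofReal L < maximalFn ((latticeMeasure n).restrict B) (x + latticePoint k) := by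
  refine lt_maximalFn_iff.2 ⟨r, hr, ?_⟩
  rwa [Measure.restrict_eq_self _ hB, latticeMeasure_closedBall_add,
    Real.volume_pi_closedBall _ hr.le, ← Real.volume_pi_closedBall x hr.le]

lemma card_mul_volume_le_volume_lt_maximalFn_restrict {n : ℕ} {L ρ : ℝ}
    (hρ : ∀ x : Fin n → ℝ, ENNReal.ofReal L < maximalFn (latticeMeasure n) x →
      ∃ r, 0 < r ∧ r ≤ ρ ∧
        ENNReal.ofReal L * volume (closedBall x r) < latticeMeasure n (closedBall x r))
    (N : ℕ) :
    ((N + 1) ^ n : ℕ) * volume {x ∈ Set.Icc (0 : Fin n → ℝ) 1 |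
        ENNReal.ofReal L < maximalFn (latticeMeasure n) x}
      ≤ volume {y | ENNReal.ofReal L < maximalFn ((latticeMeasure n).restrict
          (closedBall (fun _ => ((N : ℝ) + 1) / 2) ((N + 1) / 2 + ρ))) y} := by
  set A := {x ∈ Set.Icc (0 : Fin n → ℝ) 1 | ENNReal.ofReal L < maximalFn (latticeMeasure n) x}
  set S := {y | ENNReal.ofReal L < maximalFn ((latticeMeasure n).restrict
    (closedBall (fun _ => ((N : ℝ) + 1) / 2) ((N + 1) / 2 + ρ))) y}
  let K := Fintype.piFinset fun _ : Fin n => Finset.Icc (0 : ℤ) N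
  have htranslate : ∀ k ∈ K, (· + latticePoint k) '' (A ∩ unitCell 0) ⊆ S ∩ unitCell k := by
    rintro k hk _ ⟨x, ⟨⟨hx01, hxL⟩, hxcell⟩, rfl⟩
    obtain ⟨r, hr, hrρ, hlt⟩ := hρ x hxL
    refine ⟨lt_maximalFn_restrict_add_latticePoint hr hlt k (closedBall_subset_closedBall' ?_),
      add_latticePoint_mem_unitCell hxcell k⟩
    have hdist : dist (x + latticePoint k) (fun _ => ((N : ℝ) + 1) / 2) ≤ (N + 1) / 2 := by
      refine (dist_pi_le_iff (by positivity)).2 fun i => ?_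
      have hki := Finset.mem_Icc.1 (Fintype.mem_piFinset.1 hk i)
      have hk0 : (0 : ℝ) ≤ k i := by exact_mod_cast hki.1
      have hkN : (k i : ℝ) ≤ N := by exact_mod_cast hki.2
      have hxi : 0 ≤ x i ∧ x i ≤ 1 := ⟨hx01.1 i, hx01.2 i⟩
      rw [Pi.add_apply, latticePoint_apply, Real.dist_eq, abs_le]
      constructor <;> linarith
    linarith
  have hvolume : ∀ k, volume ((· + latticePoint k) '' (A ∩ unitCell 0)) = volume A := fun k => by
    rw [Set.image_add_right, measure_preimage_add_right,
      volume_inter_unitCell_zero (Set.sep_subset _ _)]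
  calc (((N + 1) ^ n : ℕ) : ℝ≥0∞) * volume A
      = ∑ k ∈ K, volume ((· + latticePoint k) '' (A ∩ unitCell 0)) := by
        have hK : K.card = (N + 1) ^ n := by simp [K]
        rw [Finset.sum_congr rfl fun k _ => hvolume k, Finset.sum_const, nsmul_eq_mul, hK]
    _ ≤ ∑ k ∈ K, volume (S ∩ unitCell k) :=
        Finset.sum_le_sum fun k hk => measure_mono (htranslate k hk)
    _ ≤ volume S :=
        sum_measure_inter_le volume measurableSet_unitCell (pairwise_disjoint_unitCell n) K S

lemma mul_volume_lt_maximalFn_latticeMeasure_le_of_weakType {n : ℕ} {C L ρ : ℝ} (hC : 0 ≤ C)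
    (hρ0 : 0 ≤ ρ)
    (hρ : ∀ x : Fin n → ℝ, ENNReal.ofReal L < maximalFn (latticeMeasure n) x →
      ∃ r, 0 < r ∧ r ≤ ρ ∧
        ENNReal.ofReal L * volume (closedBall x r) < latticeMeasure n (closedBall x r))
    (hweak : ∀ ν : Measure (Fin n → ℝ), IsFiniteMeasure ν →
      ENNReal.ofReal L * volume {x | ENNReal.ofReal L < maximalFn ν x}
        ≤ ENNReal.ofReal C * ν Set.univ)
    (N : ℕ) :
    ENNReal.ofReal L * volume {x ∈ Set.Icc (0 : Fin n → ℝ) 1 |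
        ENNReal.ofReal L < maximalFn (latticeMeasure n) x} * ((N + 1) ^ n : ℕ)
      ≤ ENNReal.ofReal (C * (N + (2 * ρ + 2)) ^ n) := by
  set box := closedBall (fun _ : Fin n => ((N : ℝ) + 1) / 2) ((N + 1) / 2 + ρ)
  have hbox : latticeMeasure n box ≤ ENNReal.ofReal ((N + (2 * ρ + 2)) ^ n) :=
    (latticeMeasure_closedBall_le _ (by positivity)).trans_eq (by ring_nf)
  have hfin : IsFiniteMeasure ((latticeMeasure n).restrict box) :=
    isFiniteMeasure_restrict.2 (ne_top_of_le_ne_top ENNReal.ofReal_ne_top hbox)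
  calc _ ≤ ENNReal.ofReal L * volume {y | ENNReal.ofReal L < maximalFn
          ((latticeMeasure n).restrict box) y} := by
        rw [mul_assoc, mul_comm (volume _)]
        gcongr
        exact card_mul_volume_le_volume_lt_maximalFn_restrict hρ N
    _ ≤ ENNReal.ofReal C * (latticeMeasure n).restrict box Set.univ := hweak _ hfin
    _ ≤ ENNReal.ofReal (C * (N + (2 * ρ + 2)) ^ n) := by
        rw [Measure.restrict_apply_univ, ENNReal.ofReal_mul hC]
        gcongr

theorem truncation_lemma (n : ℕ) (C : ℝ) (hC : 0 < C)
    (hweak : ∀ ν : Measure (Fin n → ℝ), IsFiniteMeasure ν → ∀ L' : ℝ, 0 < L' →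
      ENNReal.ofReal L' * volume {x | ENNReal.ofReal L' < maximalFn ν x}
        ≤ ENNReal.ofReal C * ν Set.univ)
    (L : ℝ) (hL : 1 < L) :
    ENNReal.ofReal L * volume {x ∈ Set.Icc (0 : Fin n → ℝ) 1 |
      ENNReal.ofReal L < maximalFn (latticeMeasure n) x} ≤ ENNReal.ofReal C := by
  obtain ⟨ρ, hρ0, hρ⟩ := exists_radius_bound_of_lt_maximalFn_latticeMeasure n hL
  set a := ENNReal.ofReal L * volume {x ∈ Set.Icc (0 : Fin n → ℝ) 1 |
    ENNReal.ofReal L < maximalFn (latticeMeasure n) x}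
  have ha : a ≠ ⊤ :=
    ENNReal.mul_ne_top ENNReal.ofReal_ne_top
      ((measure_mono (Set.sep_subset _ _)).trans_lt isCompact_Icc.measure_lt_top).ne
  have hbound (N : ℕ) : a.toReal * (N + 1) ^ n ≤ C * (N + (2 * ρ + 2)) ^ n := by
    have := ENNReal.toReal_mono ENNReal.ofReal_ne_top <|
      mul_volume_lt_maximalFn_latticeMeasure_le_of_weakType hC.le hρ0 hρ
        (fun ν hν => hweak ν hν L (by linarith)) N
    rwa [ENNReal.toReal_mul, ENNReal.toReal_ofReal (by positivity), ENNReal.toReal_natCast,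
      Nat.cast_pow, Nat.cast_add, Nat.cast_one] at this
  exact (ENNReal.le_ofReal_iff_toReal_le ha hC.le).2 (le_of_forall_mul_pow_le n hbound)
end

section
/- For every η > 0 there exists a constant D(η) > 0 such that for every K > 0, every t ∈ (0,1), and every n ≥ D(η)·K²/(t(1−t)): every x ∈ E_{t,K}^n satisfies Mμ(x) > e^{K²/(2+η)}, where μ is the counting measure on ℤ^n. -/
open MeasureTheory Metric Filter ProbabilityTheory
open scoped ENNReal NNReal

/-- A number `y ∈ [0,1]` is `t`-centered if `(1-t)/2 ≤ y ≤ (1+t)/2`. -/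
def tCentered (t y : ℝ) : Prop := (1 - t) / 2 ≤ y ∧ y ≤ (1 + t) / 2


/-- `E_{t,K}^n`: the set of `x ∈ [0,1]^n` with at least `n t + K √(n t (1-t))`
`t`-centered coordinates. -/
def ESet (n : ℕ) (t K : ℝ) : Set (Fin n → ℝ) :=
  {x | x ∈ Set.Icc 0 1 ∧
    (n : ℝ) * t + K * Real.sqrt (n * t * (1 - t)) ≤ ({i : Fin n | tCentered t (x i)}.ncard : ℝ)}

/-!
Use the cube of edge `2N + 1 + t` centred at `x`. In each coordinate it contains at least
`2N + 1` integers, and `2N + 2` when the coordinate is `t`-centered, so with `ε = 1/(2N+1)`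
the density is at least `(1 + ε)^m / (1 + tε)^n`, where `m ≥ nt + K√(nt(1-t))`. The bounds
`log (1 + tε) ≤ t log (1 + ε) + ε²t(1-t)/2` (convexity) and `log (1 + ε) ≥ ε - ε²` bound the
logarithm of the density below by `K s (1 - ε) - s²/2` with `s = ε√(nt(1-t))`; choosing `N`
with `s ≈ K` makes this close to `K²/2`, and larger than `K²/(2+η)` once `n t (1-t) / K²` is
large.
-/

open Real

open Set in
lemma convexOn_log_one_add_mul_add_sq {ε : ℝ} (hε : 0 ≤ ε) :
    ConvexOn ℝ (Ici 0) fun y => log (1 + y * ε) + ε ^ 2 * y ^ 2 / 2 := by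
  have hpos : ∀ y ∈ interior (Ici (0 : ℝ)), 0 < 1 + y * ε := fun y hy => by
    rw [interior_Ici] at hy; have := hy.out; positivity
  refine convexOn_of_hasDerivWithinAt2_nonneg (convex_Ici 0)
    (f' := fun y => ε / (1 + y * ε) + ε ^ 2 * y) (f'' := fun y => ε ^ 2 - ε ^ 2 / (1 + y * ε) ^ 2)
    ?_ (fun y hy => ?_) (fun y hy => ?_) (fun y hy => ?_)
  · refine ContinuousOn.add (ContinuousOn.log (by fun_prop) fun y hy => ?_) (by fun_prop)
    have : (0 : ℝ) ≤ y := hy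
    positivity
  · have h : HasDerivAt (fun y => log (1 + y * ε) + ε ^ 2 * y ^ 2 / 2)
        (ε / (1 + y * ε) + ε ^ 2 * y) y := by
      refine (((hasDerivAt_mul_const ε).const_add 1).log (hpos y hy).ne').add
        (((hasDerivAt_pow 2 y).const_mul (ε ^ 2)).div_const 2) |>.congr_deriv ?_
      push_cast; ring
    exact h.hasDerivWithinAt
  · have h : HasDerivAt (fun y => ε / (1 + y * ε) + ε ^ 2 * y)
        (ε ^ 2 - ε ^ 2 / (1 + y * ε) ^ 2) y := by
      refine ((hasDerivAt_const y ε).div ((hasDerivAt_mul_const ε).const_add 1) (hpos y hy).ne'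
        |>.add ((hasDerivAt_id y).const_mul (ε ^ 2))).congr_deriv ?_
      field_simp; ring
    exact h.hasDerivWithinAt
  · have h1 : 1 ≤ (1 + y * ε) ^ 2 := by
      rw [interior_Ici] at hy; have := hy.out; nlinarith [mul_nonneg this.le hε]
    have : ε ^ 2 / (1 + y * ε) ^ 2 ≤ ε ^ 2 := div_le_self (sq_nonneg ε) h1
    linarith

open Set in
lemma log_one_add_mul_le {ε t : ℝ} (hε : 0 ≤ ε) (ht₀ : 0 ≤ t) (ht₁ : t ≤ 1) :
    log (1 + t * ε) ≤ t * log (1 + ε) + ε ^ 2 * t * (1 - t) / 2 := by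
  have h := (convexOn_log_one_add_mul_add_sq hε).2 (mem_Ici.2 le_rfl) (mem_Ici.2 zero_le_one)
    (sub_nonneg.2 ht₁) ht₀ (by ring)
  simp only [smul_eq_mul, mul_zero, zero_add, mul_one, one_mul, zero_mul, add_zero, log_one] at h
  nlinarith

lemma sub_sq_le_log_one_add {ε : ℝ} (hε : 0 ≤ ε) : ε - ε ^ 2 ≤ log (1 + ε) := by
  have h := one_sub_inv_le_log_of_pos (by positivity : 0 < 1 + ε)
  have : ε - ε ^ 2 ≤ 1 - (1 + ε)⁻¹ := by
    rw [← one_div, le_sub_comm, div_le_iff₀ (by positivity)]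
    nlinarith [pow_nonneg hε 3]
  linarith

lemma le_mul_log_one_add_sub_mul_log {ε t K c n m : ℝ} (hε : 0 ≤ ε) (ht₀ : 0 ≤ t) (ht₁ : t ≤ 1)
    (hn : 0 ≤ n) (hKc : 0 ≤ K * c) (hc : c ^ 2 = n * t * (1 - t)) (hm : n * t + K * c ≤ m) :
    K * (c * ε) * (1 - ε) - (c * ε) ^ 2 / 2 ≤ m * log (1 + ε) - n * log (1 + t * ε) := by
  have hlog : 0 ≤ log (1 + ε) := log_nonneg (by linarith)
  have h₁ := mul_le_mul_of_nonneg_right hm hlog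
  have h₂ := mul_le_mul_of_nonneg_left (log_one_add_mul_le hε ht₀ ht₁) hn
  have h₃ := mul_le_mul_of_nonneg_left (sub_sq_le_log_one_add hε) hKc
  have h₄ : n * (ε ^ 2 * t * (1 - t) / 2) = (c * ε) ^ 2 / 2 := by rw [mul_pow, hc]; ring
  nlinarith

lemma sq_mul_half_sub_le {K s ε β : ℝ} (hK : 0 ≤ K) (hs : 0 ≤ s) (hεβ : ε ≤ β)
    (hs_lo : K * (1 - 2 * β) ≤ s) (hs_hi : s ≤ K) :
    K ^ 2 * (1 / 2 - β) ≤ K * s * (1 - ε) - s ^ 2 / 2 := by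
  nlinarith [mul_nonneg (sub_nonneg.2 hs_hi) (sub_nonneg.2 hs_lo),
    mul_le_mul_of_nonneg_left hεβ (mul_nonneg hK hs)]

lemma exists_odd_mul_mem_Ico {K c : ℝ} (hK : 0 < K) (hc : 0 ≤ c) :
    ∃ N : ℕ, K * (2 * N + 1) ∈ Set.Ico c (c + 2 * K) := by
  obtain ⟨N, hN₁, hN₂⟩ : ∃ N : ℕ, c / K ≤ 2 * N + 1 ∧ (2 * N + 1 : ℝ) < c / K + 2 := by
    rcases le_or_gt 1 (c / K) with h | h
    · refine ⟨⌈(c / K - 1) / 2⌉₊, ?_, ?_⟩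
      · linarith [Nat.le_ceil ((c / K - 1) / 2)]
      · linarith [Nat.ceil_lt_add_one (by linarith : 0 ≤ (c / K - 1) / 2)]
    · exact ⟨0, by push_cast; linarith, by push_cast; linarith [div_nonneg hc hK.le]⟩
  rw [div_le_iff₀ hK] at hN₁
  rw [← sub_lt_iff_lt_add, lt_div_iff₀ hK] at hN₂
  exact ⟨N, by linarith, by linarith⟩

lemma exp_mul_add_pow_lt {a q t : ℝ} {m k : ℕ} (hq : 0 < q) (ht : 0 ≤ t)
    (h : a < m * log (1 + q⁻¹) - (m + k) * log (1 + t * q⁻¹)) :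
    exp a * (q + t) ^ (m + k) < (q + 1) ^ m * q ^ k := by
  have h₁ : q + 1 = q * (1 + q⁻¹) := by field_simp
  have h₂ : q + t = q * (1 + t * q⁻¹) := by field_simp
  rw [← log_lt_log_iff (by positivity) (by positivity), log_mul (by positivity) (by positivity),
    log_mul (by positivity) (by positivity), log_exp, log_pow, log_pow, log_pow, h₁, h₂,
    log_mul hq.ne' (by positivity), log_mul hq.ne' (by positivity)]
  push_cast
  linarith

lemma exp_mul_pow_lt {η K t c : ℝ} {m k N : ℕ} (hη : 0 < η) (hK : 0 < K) (ht₀ : 0 ≤ t)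
    (ht₁ : t ≤ 1) (hc : c ^ 2 = (m + k) * t * (1 - t)) (hKc : 3 * (2 + η) / η * K ≤ c)
    (hm : (m + k) * t + K * c ≤ m) (hN₁ : c ≤ K * (2 * N + 1))
    (hN₂ : K * (2 * N + 1) < c + 2 * K) :
    exp (K ^ 2 / (2 + η)) * (2 * N + 1 + t) ^ (m + k) < (2 * N + 2) ^ m * (2 * N + 1) ^ k := by
  set q : ℝ := 2 * N + 1
  have hq : 0 < q := by positivity
  have hc₀ : 0 < c := lt_of_lt_of_le (by positivity) hKc
  set β := K / c
  have hβc : β * c = K := div_mul_cancel₀ K hc₀.ne'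
  have hβ : β ≤ η / (3 * (2 + η)) := by
    rw [div_le_div_iff₀ hc₀ (by positivity)]
    rw [div_mul_eq_mul_div, div_le_iff₀ hη] at hKc
    linarith
  have hβ_lt : 1 / (2 + η) < 1 / 2 - β := by
    have : η / (3 * (2 + η)) < 1 / 2 - 1 / (2 + η) := by
      rw [div_lt_iff₀ (by positivity)]; field_simp; nlinarith
    linarith
  have hεβ : q⁻¹ ≤ β := by
    rw [inv_eq_one_div, div_le_div_iff₀ hq hc₀]; linarith
  have hs_hi : c * q⁻¹ ≤ K := by
    rw [← div_eq_mul_inv, div_le_iff₀ hq]; linarith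
  have hs_lo : K * (1 - 2 * β) ≤ c * q⁻¹ := by
    rw [← div_eq_mul_inv, le_div_iff₀ hq]
    have : 0 ≤ 1 - 2 * β := by
      linarith [show η / (3 * (2 + η)) ≤ 1 / 3 by rw [div_le_iff₀ (by positivity)]; linarith]
    nlinarith [mul_le_mul_of_nonneg_right hN₂.le this, mul_nonneg hK.le (by positivity : 0 ≤ β)]
  rw [show (2 * N + 2 : ℝ) = q + 1 by ring]
  refine exp_mul_add_pow_lt hq ht₀ ?_
  calc K ^ 2 / (2 + η) < K ^ 2 * (1 / 2 - β) := by
        rw [div_eq_mul_one_div]; exact mul_lt_mul_of_pos_left hβ_lt (by positivity)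
    _ ≤ K * (c * q⁻¹) * (1 - q⁻¹) - (c * q⁻¹) ^ 2 / 2 :=
        sq_mul_half_sub_le hK.le (by positivity) hεβ hs_lo hs_hi
    _ ≤ m * log (1 + q⁻¹) - (m + k) * log (1 + t * q⁻¹) :=
        le_mul_log_one_add_sub_mul_log (by positivity) ht₀ ht₁ (by positivity)
          (by positivity) hc hm

open Finset in
lemma le_card_Icc_ceil_floor {a b : ℝ} {k : ℕ} (h : a + k ≤ b) : k ≤ #(Icc ⌈a⌉ ⌊b⌋) := by
  have : ⌈a⌉ + k - 1 ≤ ⌊b⌋ := Int.le_floor.2 (by push_cast; linarith [Int.ceil_lt_add_one a])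
  rw [Int.card_Icc]; omega

open Finset in
lemma two_mul_add_two_le_card_Icc_ceil_floor {t y : ℝ} (N : ℕ) (hy : tCentered t y) :
    2 * N + 2 ≤ #(Icc ⌈y - (N + (1 + t) / 2)⌉ ⌊y + (N + (1 + t) / 2)⌋) := by
  have hsub : Icc (-N : ℤ) (N + 1) ⊆ Icc ⌈y - (N + (1 + t) / 2)⌉ ⌊y + (N + (1 + t) / 2)⌋ := by
    refine Icc_subset_Icc (Int.ceil_le.2 ?_) (Int.le_floor.2 ?_) <;> push_cast <;>
      linarith [hy.1, hy.2]
  have := card_le_card hsub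
  rw [Int.card_Icc] at this
  omega

open Finset in
lemma pow_mul_pow_le_prod {ι : Type*} (s : Finset ι) (p : ι → Prop) [DecidablePred p]
    {f : ι → ℕ} {a b : ℕ} (ha : ∀ i, p i → a ≤ f i) (hb : ∀ i, ¬ p i → b ≤ f i) :
    a ^ #(s.filter p) * b ^ #(s.filter fun i => ¬ p i) ≤ ∏ i ∈ s, f i := by
  rw [← prod_const, ← prod_const, ← prod_ite]
  exact prod_le_prod' fun i _ => by split_ifs with h; exacts [ha i h, hb i h]

lemma latticeMeasure_closedBall_ge {n : ℕ} (x : Fin n → ℝ) {r : ℝ} (hr : 0 ≤ r) :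
    ((∏ i, (Finset.Icc ⌈x i - r⌉ ⌊x i + r⌋).card : ℕ) : ℝ≥0∞) ≤
      latticeMeasure n (closedBall x r) := by
  set S := Fintype.piFinset fun i => Finset.Icc ⌈x i - r⌉ ⌊x i + r⌋
  have hmem : ∀ k ∈ S, (fun i => (k i : ℝ)) ∈ closedBall x r := by
    intro k hk
    rw [mem_closedBall, dist_pi_le_iff hr]
    intro i
    have hki := Finset.mem_Icc.1 (Fintype.mem_piFinset.1 hk i)
    rw [Real.dist_eq, abs_sub_le_iff]
    constructor
    · linarith [Int.le_floor.1 hki.2]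
    · linarith [Int.ceil_le.1 hki.1]
  calc ((∏ i, (Finset.Icc ⌈x i - r⌉ ⌊x i + r⌋).card : ℕ) : ℝ≥0∞)
      = ∑ k ∈ S, Measure.dirac (fun i => (k i : ℝ)) (closedBall x r) := by
        rw [Finset.sum_congr rfl fun k hk => Measure.dirac_apply_of_mem (hmem k hk)]
        simp [S, Fintype.card_piFinset]
    _ ≤ ∑' k : Fin n → ℤ, Measure.dirac (fun i => (k i : ℝ)) (closedBall x r) :=
        ENNReal.sum_le_tsum S
    _ = latticeMeasure n (closedBall x r) := by
        rw [latticeMeasure, Measure.sum_apply _ measurableSet_closedBall]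

lemma ofReal_lt_maximalFn {n : ℕ} {μ : Measure (Fin n → ℝ)} {x : Fin n → ℝ} {a r : ℝ}
    (ha : 0 ≤ a) (hr : 0 < r) (h : ENNReal.ofReal (a * (2 * r) ^ n) < μ (closedBall x r)) :
    ENNReal.ofReal a < maximalFn μ x := by
  have hvol : volume (closedBall x r) = ENNReal.ofReal ((2 * r) ^ n) := by
    simp [Real.volume_pi_closedBall x hr.le]
  calc ENNReal.ofReal a < μ (closedBall x r) / volume (closedBall x r) := by
        rw [hvol, ENNReal.lt_div_iff_mul_lt (by simp [hr]) (by simp), ← ENNReal.ofReal_mul ha]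
        exact h
    _ ≤ maximalFn μ x :=
        le_iSup₂ (f := fun ρ (_ : 0 < ρ) => μ (closedBall x ρ) / volume (closedBall x ρ)) r hr

open Classical Finset in
lemma pow_mul_pow_le_latticeMeasure_closedBall {n : ℕ} (x : Fin n → ℝ) {t : ℝ} (ht : 0 ≤ t)
    (N : ℕ) :
    (((2 * N + 2) ^ #{i | tCentered t (x i)} * (2 * N + 1) ^ #{i | ¬ tCentered t (x i)} : ℕ) :
      ℝ≥0∞) ≤ latticeMeasure n (closedBall x (N + (1 + t) / 2)) := by
  refine le_trans ?_ (latticeMeasure_closedBall_ge x (by positivity))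
  exact_mod_cast pow_mul_pow_le_prod univ _
    (fun i hi => two_mul_add_two_le_card_Icc_ceil_floor N hi)
    fun i _ => le_card_Icc_ceil_floor (by push_cast; linarith)

open Classical Finset in
theorem maximal_large_on_ESet (η : ℝ) (hη : 0 < η) :
    ∃ D : ℝ, 0 < D ∧ ∀ K : ℝ, 0 < K → ∀ t : ℝ, 0 < t → t < 1 →
      ∀ n : ℕ, D * K ^ 2 / (t * (1 - t)) ≤ (n : ℝ) →
        ∀ x ∈ ESet n t K,
          ENNReal.ofReal (Real.exp (K ^ 2 / (2 + η))) < maximalFn (latticeMeasure n) x := by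
  refine ⟨(3 * (2 + η) / η) ^ 2, by positivity, fun K hK t ht₀ ht₁ n hn x hx => ?_⟩
  set m := #{i | tCentered t (x i)}
  set k := #{i | ¬ tCentered t (x i)}
  have hmk : m + k = n := by
    simpa using card_filter_add_card_filter_not (s := univ) fun i => tCentered t (x i)
  have hmk' : (n : ℝ) = m + k := by exact_mod_cast hmk.symm
  set c := Real.sqrt (n * t * (1 - t))
  have hc : c ^ 2 = n * t * (1 - t) := Real.sq_sqrt (by positivity)
  have hKc : 3 * (2 + η) / η * K ≤ c := by
    rw [Real.le_sqrt (by positivity) (by positivity)]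
    rw [div_le_iff₀ (by nlinarith)] at hn
    linarith
  have hm : n * t + K * c ≤ m := by
    simpa only [← coe_filter_univ, Set.ncard_coe_finset] using hx.2
  obtain ⟨N, hN₁, hN₂⟩ := exists_odd_mul_mem_Ico hK (Real.sqrt_nonneg (n * t * (1 - t)))
  have hbound := exp_mul_pow_lt hη hK ht₀.le ht₁.le (hmk' ▸ hc) hKc (hmk' ▸ hm) hN₁ hN₂
  refine ofReal_lt_maximalFn (Real.exp_pos _).le (r := N + (1 + t) / 2) (by positivity) ?_
  refine lt_of_lt_of_le ?_ (pow_mul_pow_le_latticeMeasure_closedBall x ht₀.le N)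
  rw [← ENNReal.ofReal_natCast, ENNReal.ofReal_lt_ofReal_iff (by positivity)]
  rw [hmk] at hbound
  convert hbound using 2 <;> push_cast <;> ring
end

section
/- Let t ∈ (0,1), let m be a real number with 0 ≤ m ≤ n, and let x ∈ [0,1]^n have at least m t-centered coordinates. Then, with μ the counting measure on ℤ^n, Mμ(x) ≥ sup over positive integers s of (2s)^m (2s−1)^{n−m} / (2s − 1 + t)^n. -/
open MeasureTheory Metric Filter ProbabilityTheory
open scoped ENNReal NNReal

theorem maximal_ge_sup_over_integer_radii (n : ℕ) (t m : ℝ) (ht0 : 0 < t) (ht1 : t < 1)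
    (hm0 : 0 ≤ m) (hmn : m ≤ (n : ℝ)) (x : Fin n → ℝ) (hx : x ∈ Set.Icc (0 : Fin n → ℝ) 1)
    (hcount : m ≤ ({i : Fin n | tCentered t (x i)}.ncard : ℝ)) :
    ⨆ s : ℕ+, ENNReal.ofReal ((2 * (s : ℝ)) ^ m * (2 * (s : ℝ) - 1) ^ ((n : ℝ) - m)
      / (2 * (s : ℝ) - 1 + t) ^ (n : ℝ)) ≤ maximalFn (latticeMeasure n) x := by
  classical
  refine iSup_le fun s => ?_
  have hs1 : (1:ℝ) ≤ (s:ℝ) := by exact_mod_cast s.one_le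
  set a : ℝ := 2 * (s:ℝ) with hadef
  set b : ℝ := 2 * (s:ℝ) - 1 with hbdef
  have hb1 : (1:ℝ) ≤ b := by rw [hbdef]; linarith
  have hb0 : (0:ℝ) < b := by linarith
  have ha0 : (0:ℝ) < a := by rw [hadef]; linarith
  have hba : b ≤ a := by rw [hadef, hbdef]; linarith
  set r : ℝ := (b + t) / 2 with hrdef
  have hr0 : 0 < r := by rw [hrdef]; linarith
  -- the centered-index set
  set C : Finset (Fin n) := Finset.univ.filter (fun i => tCentered t (x i)) with hCdef
  set k := C.card with hkdef
  have hkn : k ≤ n := by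
    simpa [hkdef, hCdef] using
      (Finset.card_filter_le Finset.univ (fun i => tCentered t (x i)))
  have hmk : m ≤ (k : ℝ) := by
    refine hcount.trans (le_of_eq ?_)
    norm_cast
    rw [Set.ncard_eq_toFinset_card']
    congr 1
    ext i
    simp [hCdef, hkdef]
  -- the lattice points
  set Si : Fin n → Finset ℤ := fun i =>
    if tCentered t (x i) then Finset.Icc (1 - (s:ℤ)) (s:ℤ)
    else Finset.Icc ⌈x i - r⌉ (⌈x i - r⌉ + (2*(s:ℤ) - 2)) with hSidef
  set F := Fintype.piFinset Si with hFdef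
  have hs1' : (1:ℕ) ≤ (s:ℕ) := s.one_le
  have hFcard : F.card = (2*(s:ℕ))^k * (2*(s:ℕ)-1)^(n-k) := by
    rw [hFdef, Fintype.card_piFinset]
    have hcard : ∀ i, (Si i).card = if tCentered t (x i) then 2*(s:ℕ) else 2*(s:ℕ)-1 := by
      intro i
      by_cases h : tCentered t (x i) <;> simp only [hSidef, h, if_true, if_false, Int.card_Icc]
      · omega
      · omega
    simp_rw [hcard]
    rw [Finset.prod_ite, Finset.prod_const, Finset.prod_const]
    congr 2
    have := Finset.card_filter_add_card_filter_not
      (s := (Finset.univ : Finset (Fin n))) (p := fun i => tCentered t (x i))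
    simp only [Finset.card_univ, Fintype.card_fin] at this
    have hk' : (Finset.univ.filter (fun i => tCentered t (x i))).card = k := rfl
    omega
  have hmem : ∀ kv ∈ F, (fun i => ((kv i : ℝ))) ∈ closedBall x r := by
    intro kv hkv
    rw [mem_closedBall, dist_pi_le_iff hr0.le]
    intro i
    have hki := Fintype.mem_piFinset.1 hkv i
    rw [Real.dist_eq, abs_le]
    by_cases h : tCentered t (x i)
    · simp only [hSidef, h, if_true, Finset.mem_Icc] at hki
      have h1' : (1:ℝ) - (s:ℝ) ≤ (kv i : ℝ) := by exact_mod_cast hki.1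
      have h2' : ((kv i : ℝ)) ≤ (s:ℝ) := by exact_mod_cast hki.2
      have hx1 : (1 - t) / 2 ≤ x i := h.1
      have hx2 : x i ≤ (1 + t) / 2 := h.2
      rw [hrdef, hbdef]
      constructor <;> linarith
    · simp only [hSidef, h, if_false, Finset.mem_Icc] at hki
      have hc1 : x i - r ≤ (⌈x i - r⌉ : ℝ) := Int.le_ceil _
      have hc2 : (⌈x i - r⌉ : ℝ) ≤ x i - r + 1 := (Int.ceil_lt_add_one (x i - r)).le
      have h1' : ((⌈x i - r⌉ : ℤ) : ℝ) ≤ (kv i : ℝ) := by exact_mod_cast hki.1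
      have h2' : ((kv i : ℝ)) ≤ (⌈x i - r⌉ : ℝ) + (2*(s:ℝ) - 2) := by
        have := hki.2; exact_mod_cast this
      have hr2 : 2 * r = b + t := by rw [hrdef]; ring
      rw [hbdef] at hr2
      constructor <;> linarith
  -- measure lower bound
  have hμ : (F.card : ℝ≥0∞) ≤ latticeMeasure n (closedBall x r) := by
    rw [latticeMeasure, Measure.sum_apply _ measurableSet_closedBall]
    calc (F.card : ℝ≥0∞) = ∑ kv ∈ F, 1 := by simp
      _ = ∑ kv ∈ F, Measure.dirac (fun i => ((kv i : ℝ))) (closedBall x r) := by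
          refine Finset.sum_congr rfl fun kv hkv => ?_
          rw [Measure.dirac_apply' _ measurableSet_closedBall,
            Set.indicator_of_mem (hmem kv hkv)]
          rfl
      _ ≤ ∑' kv : Fin n → ℤ, Measure.dirac (fun i => ((kv i : ℝ))) (closedBall x r) :=
          ENNReal.sum_le_tsum F
  have hvol : volume (closedBall x r) = ENNReal.ofReal ((2*r)^n) := by
    rw [Real.volume_pi_closedBall x hr0.le]
    simp
  have hV0 : (0:ℝ) < (2*r)^n := by positivity
  -- the key real inequality
  have hnum : a ^ m * b ^ ((n : ℝ) - m) ≤ (F.card : ℝ) := by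
    have hFc : (F.card : ℝ) = a ^ (k:ℝ) * b ^ ((n:ℝ) - (k:ℝ)) := by
      have hnk : ((n:ℝ) - (k:ℝ)) = ((n - k : ℕ) : ℝ) := by
        rw [Nat.cast_sub hkn]
      have hc : ((2*(s:ℕ)-1 : ℕ) : ℝ) = b := by
        rw [hbdef, Nat.cast_sub (show 1 ≤ 2*(s:ℕ) by omega)]
        push_cast; ring
      rw [hFcard, hnk, Real.rpow_natCast, Real.rpow_natCast]
      push_cast [hc]
      rw [hadef]
    rw [hFc]
    have e1 : a ^ ((k:ℝ)) = a ^ m * a ^ ((k:ℝ) - m) := by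
      rw [← Real.rpow_add ha0]; ring_nf
    have e2 : b ^ ((n:ℝ) - m) = b ^ ((k:ℝ) - m) * b ^ ((n:ℝ) - (k:ℝ)) := by
      rw [← Real.rpow_add hb0]; ring_nf
    rw [e1, e2]
    have hle : b ^ ((k:ℝ) - m) ≤ a ^ ((k:ℝ) - m) :=
      Real.rpow_le_rpow hb0.le hba (by linarith)
    have h1 : (0:ℝ) ≤ a ^ m := (Real.rpow_pos_of_pos ha0 m).le
    have h2 : (0:ℝ) ≤ b ^ ((n:ℝ) - (k:ℝ)) := (Real.rpow_pos_of_pos hb0 _).le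
    have h3 : (0:ℝ) ≤ b ^ ((k:ℝ) - m) := (Real.rpow_pos_of_pos hb0 _).le
    calc a ^ m * (b ^ ((k:ℝ) - m) * b ^ ((n:ℝ) - (k:ℝ)))
        ≤ a ^ m * (a ^ ((k:ℝ) - m) * b ^ ((n:ℝ) - (k:ℝ))) := by
          apply mul_le_mul_of_nonneg_left _ h1
          exact mul_le_mul_of_nonneg_right hle h2
      _ = a ^ m * a ^ ((k:ℝ) - m) * b ^ ((n:ℝ) - (k:ℝ)) := by ring
  have hreal : a ^ m * b ^ ((n : ℝ) - m) / (b + t) ^ (n : ℝ) ≤ (F.card : ℝ) / (2*r)^n := by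
    have h2r : 2 * r = b + t := by rw [hrdef]; ring
    rw [h2r, ← Real.rpow_natCast (b + t) n]
    have hbt : (0:ℝ) < (b + t) ^ (n:ℝ) := Real.rpow_pos_of_pos (by linarith) _
    gcongr
  -- assemble
  calc ENNReal.ofReal (a ^ m * b ^ ((n : ℝ) - m) / (b + t) ^ (n : ℝ))
      ≤ ENNReal.ofReal ((F.card : ℝ) / (2*r)^n) := ENNReal.ofReal_le_ofReal hreal
    _ = (F.card : ℝ≥0∞) / ENNReal.ofReal ((2*r)^n) := by
        rw [ENNReal.ofReal_div_of_pos hV0, ENNReal.ofReal_natCast]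
    _ ≤ latticeMeasure n (closedBall x r) / volume (closedBall x r) := by
        rw [hvol]
        exact ENNReal.div_le_div hμ le_rfl
    _ ≤ maximalFn (latticeMeasure n) x := by
        rw [maximalFn]
        exact le_iSup₂_of_le r hr0 le_rfl
end

section
/- Let (B_t)_{t≥0} be a standard Brownian motion, i.e. a stochastic process with B_0 = 0 almost surely, almost surely continuous sample paths, independent increments, and B_t − B_s distributed as a centered Gaussian of variance t − s for 0 ≤ s ≤ t. For every η ∈ (0,2) there exists a constant c(η) > 0 such that for all sufficiently large A (in particular for all A ≥ some A₀(η) ≥ e), P( sup_{1 ≤ t ≤ A−1} B_t/√t ≥ √((2−η) log log A) ) ≥ c(η). -/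
/-!
Fix a large ratio `q` and sample `B` on the geometric grid `1, q, q², …, q ^ N ≤ A - 1`, so
that `N ≍ log A / log q`. Write `s = log log A`. The increments over consecutive grid intervals
are independent, and each exceeds `√((2 - η/2) s)` of its standard deviations with probability
`p ≳ exp (-(1 - γ) s)` for some `γ > 0`; since `N p ≍ exp (γ s) → ∞`, with high probability one
of them does. A union bound shows that, with high probability, `B (q ^ i) > -2 √(s q ^ i)` for
every `i`, because `N exp (-2 s) → 0`. On both events, at the right endpoint `T` of a large
increment, `B T ≥ (√(2 - η/2) √(1 - 1/q) - 2 / √q) √(s T) ≥ √((2 - η) s T)` once `q` is large.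
-/

open MeasureTheory Filter ProbabilityTheory
open scoped ENNReal NNReal

/-- A standard Brownian motion: `B 0 = 0` a.s., a.s. continuous paths on `[0,∞)`,
independent increments, and Gaussian increments `B t - B s ~ N(0, t - s)` for `0 ≤ s ≤ t`. -/
structure IsStandardBM {Ω : Type*} [MeasurableSpace Ω] (P : Measure Ω)
    (B : ℝ → Ω → ℝ) : Prop where
  meas : ∀ t, Measurable (B t)
  start : ∀ᵐ ω ∂P, B 0 ω = 0
  cont : ∀ᵐ ω ∂P, ContinuousOn (fun t => B t ω) (Set.Ici 0)
  indep : ∀ (n : ℕ) (t : ℕ → ℝ), (∀ i, 0 ≤ t i) → Monotone t →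
    iIndepFun
      (fun i : Fin n => fun ω => B (t (i.1 + 1)) ω - B (t i.1) ω) P
  incr : ∀ s t : ℝ, 0 ≤ s → s ≤ t →
    Measure.map (fun ω => B t ω - B s ω) P = gaussianReal 0 ((t - s).toNNReal)

open Real Set Topology

namespace ProbabilityTheory

lemma gaussianReal_Ici_mul_sqrt {v : ℝ≥0} (hv : v ≠ 0) (x : ℝ) :
    gaussianReal 0 v (Ici (x * √v)) = gaussianReal 0 1 (Ici x) := by
  have hsqrt : 0 < √(v : ℝ) := sqrt_pos.2 (by positivity)
  have hmap : (gaussianReal 0 1).map (√(v : ℝ) * ·) = gaussianReal 0 v := by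
    rw [gaussianReal_map_const_mul, mul_zero, mul_one]
    congr
    simp
  rw [← hmap, Measure.map_apply (measurable_const_mul _) measurableSet_Ici]
  congr 1
  ext y
  simp [mul_comm x, mul_le_mul_iff_right₀ hsqrt]

lemma gaussianReal_Iic_neg (v : ℝ≥0) (x : ℝ) :
    gaussianReal 0 v (Iic (-x)) = gaussianReal 0 v (Ici x) := by
  conv_lhs => rw [← neg_zero, ← gaussianReal_map_neg]
  rw [Measure.map_apply measurable_neg measurableSet_Iic]
  congr 1
  ext y
  simp

lemma gaussianReal_Ici_le_exp {x : ℝ} (hx : 0 ≤ x) :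
    gaussianReal 0 1 (Ici x) ≤ ENNReal.ofReal (exp (-x ^ 2 / 2)) := by
  rw [← ofReal_measureReal]
  refine ENNReal.ofReal_le_ofReal ?_
  have hchernoff :=
    measure_ge_le_exp_mul_mgf x hx (integrable_exp_mul_gaussianReal (μ := 0) (v := 1) x)
  rw [mgf_fun_id_gaussianReal] at hchernoff
  calc (gaussianReal 0 1).real (Ici x) ≤ _ := hchernoff
    _ = exp (-x ^ 2 / 2) := by
      rw [← exp_add]
      push_cast
      ring_nf

lemma gaussianPDFReal_zero_one (y : ℝ) :
    gaussianPDFReal 0 1 y = (√(2 * π))⁻¹ * exp (-y ^ 2 / 2) := by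
  simp [gaussianPDFReal]

lemma ofReal_exp_le_gaussianReal_Ici {x : ℝ} (hx : 0 ≤ x) :
    ENNReal.ofReal ((√(2 * π))⁻¹ * exp (-(x + 1) ^ 2 / 2)) ≤ gaussianReal 0 1 (Ici x) := by
  rw [gaussianReal_apply_eq_integral _ one_ne_zero]
  refine ENNReal.ofReal_le_ofReal ?_
  calc (√(2 * π))⁻¹ * exp (-(x + 1) ^ 2 / 2)
      = ∫ _ in Ioc x (x + 1), (√(2 * π))⁻¹ * exp (-(x + 1) ^ 2 / 2) := by
        simp
    _ ≤ ∫ y in Ioc x (x + 1), gaussianPDFReal 0 1 y := by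
        refine setIntegral_mono_on (integrable_const _)
          (integrable_gaussianPDFReal 0 1).integrableOn measurableSet_Ioc fun y hy => ?_
        obtain ⟨hxy, hyx⟩ := hy
        rw [gaussianPDFReal_zero_one]
        gcongr
        nlinarith
    _ ≤ ∫ y in Ici x, gaussianPDFReal 0 1 y :=
        setIntegral_mono_set (integrable_gaussianPDFReal 0 1).integrableOn
          (ae_of_all _ (gaussianPDFReal_nonneg 0 1))
          (Ioc_subset_Ioi_self.trans Ioi_subset_Ici_self).eventuallyLE

/-- The linear term of `(x + 1) ^ 2` is absorbed by `2 x ≤ ε x ^ 2 + ε⁻¹`. -/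
lemma exists_ofReal_exp_le_gaussianReal_Ici {ε : ℝ} (hε : 0 < ε) :
    ∃ C > 0, ∀ x, 0 ≤ x →
      ENNReal.ofReal (C * exp (-(1 + ε) * x ^ 2 / 2)) ≤ gaussianReal 0 1 (Ici x) := by
  refine ⟨(√(2 * π))⁻¹ * exp (-(1 + ε⁻¹) / 2), by positivity, fun x hx => ?_⟩
  refine le_trans (ENNReal.ofReal_le_ofReal ?_) (ofReal_exp_le_gaussianReal_Ici hx)
  rw [mul_assoc, ← exp_add]
  gcongr
  have hlinear : 2 * x ≤ ε * x ^ 2 + ε⁻¹ := by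
    have hsq := sq_nonneg (ε * x - 1)
    have hinv : ε * ε⁻¹ = 1 := mul_inv_cancel₀ hε.ne'
    nlinarith
  nlinarith

end ProbabilityTheory

lemma one_sub_ofReal_pow_le_ofReal_exp {p : ℝ} (hp : 0 ≤ p) (N : ℕ) :
    (1 - ENNReal.ofReal p) ^ N ≤ ENNReal.ofReal (exp (-(N * p))) :=
  calc (1 - ENNReal.ofReal p) ^ N ≤ ENNReal.ofReal (exp (-p)) ^ N := by
        gcongr
        rw [← ENNReal.ofReal_one, ← ENNReal.ofReal_sub _ hp]
        exact ENNReal.ofReal_le_ofReal (by linarith [add_one_le_exp (-p)])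
    _ = ENNReal.ofReal (exp (-(N * p))) := by
        rw [← ENNReal.ofReal_pow (exp_pos _).le, ← exp_nat_mul, mul_neg]

lemma le_iSup_div_sqrt_of_increment {f : ℝ → ℝ} {q T L a m : ℝ} (hq : 1 < q)
    (hf : ContinuousOn f (Icc 1 T)) (h : L + a / √q ≤ m * √(1 - 1 / q)) {n : ℕ}
    (hn : q ^ (n + 1) ≤ T) (hinc : m * √(q ^ (n + 1) - q ^ n) ≤ f (q ^ (n + 1)) - f (q ^ n))
    (hlow : -(a * √(q ^ n)) < f (q ^ n)) :
    L ≤ ⨆ t : Icc (1 : ℝ) T, f t / √t := by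
  set u := q ^ (n + 1)
  have hu : 1 ≤ u := one_le_pow₀ hq.le
  have hprev : q ^ n = u / q := by
    rw [eq_div_iff (by positivity)]
    exact (pow_succ q n).symm
  have hsqrt_prev : √(q ^ n) = √u / √q := by rw [hprev, sqrt_div' _ (by positivity)]
  have hsqrt_gap : √(u - q ^ n) = √u * √(1 - 1 / q) := by
    rw [hprev, ← sqrt_mul (by positivity)]
    ring_nf
  have hscaled := mul_le_mul_of_nonneg_right h (sqrt_nonneg u)
  rw [hsqrt_gap] at hinc
  rw [hsqrt_prev] at hlow
  have hLu : L * √u ≤ f u := by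
    have hexpand : (L + a / √q) * √u = L * √u + a * (√u / √q) := by ring
    linarith [mul_right_comm m (√(1 - 1 / q)) (√u), mul_comm (√u) (√(1 - 1 / q))]
  have hmem : u ∈ Icc 1 T := ⟨hu, hn⟩
  have hbdd : BddAbove (range fun t : Icc (1 : ℝ) T => f t / √t) := by
    have hcont : ContinuousOn (fun t => f t / √t) (Icc 1 T) :=
      hf.div continuous_sqrt.continuousOn fun t ht => (sqrt_pos.2 (by linarith [ht.1])).ne'
    simpa [image_eq_range] using (isCompact_Icc.image_of_continuousOn hcont).bddAbove
  calc L ≤ f u / √u := by rwa [le_div_iff₀ (sqrt_pos.2 (by linarith))]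
    _ ≤ _ := le_ciSup hbdd ⟨u, hmem⟩

namespace IsStandardBM

variable {Ω : Type*} [MeasurableSpace Ω] {P : Measure Ω} {B : ℝ → Ω → ℝ}

lemma measure_mul_sqrt_le_sub (hB : IsStandardBM P B) {s t : ℝ} (hs : 0 ≤ s) (hst : s < t)
    (x : ℝ) : P {ω | x * √(t - s) ≤ B t ω - B s ω} = gaussianReal 0 1 (Ici x) := by
  have hv : (t - s).toNNReal ≠ 0 := by simpa using hst
  have hmeas : Measurable fun ω => B t ω - B s ω := (hB.meas t).sub (hB.meas s)
  rw [← gaussianReal_Ici_mul_sqrt hv, ← hB.incr s t hs hst.le,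
    Measure.map_apply hmeas measurableSet_Ici,
    Real.coe_toNNReal _ (sub_nonneg.2 hst.le)]
  rfl

lemma measure_le_neg_mul_sqrt (hB : IsStandardBM P B) {t : ℝ} (ht : 0 < t) (x : ℝ) :
    P {ω | B t ω ≤ -(x * √t)} = gaussianReal 0 1 (Ici x) := by
  have hv : t.toNNReal ≠ 0 := by simpa using ht
  have hlaw : P.map (fun ω => B t ω - B 0 ω) = gaussianReal 0 t.toNNReal := by
    simpa using hB.incr 0 t le_rfl ht.le
  have hae : {ω | B t ω ≤ -(x * √t)} =ᵐ[P] {ω | B t ω - B 0 ω ≤ -(x * √t)} := by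
    filter_upwards [hB.start] with ω hω
    change (B t ω ≤ _) = (B t ω - B 0 ω ≤ _)
    rw [hω, sub_zero]
  have hmeas : Measurable fun ω => B t ω - B 0 ω := (hB.meas t).sub (hB.meas 0)
  rw [measure_congr hae, ← gaussianReal_Ici_mul_sqrt hv, ← gaussianReal_Iic_neg, ← hlaw,
    Measure.map_apply hmeas measurableSet_Iic,
    Real.coe_toNNReal _ ht.le]
  rfl

lemma measure_iInter_sub_lt_mul_sqrt [IsProbabilityMeasure P] (hB : IsStandardBM P B)
    {t : ℕ → ℝ} (ht0 : ∀ i, 0 ≤ t i) (ht : StrictMono t) (N : ℕ) (x : ℝ) :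
    P (⋂ i : Fin N, {ω | B (t (i + 1)) ω - B (t i) ω < x * √(t (i + 1) - t i)}) =
      (1 - gaussianReal 0 1 (Ici x)) ^ N := by
  have hfactor (i : ℕ) :
      P {ω | B (t (i + 1)) ω - B (t i) ω < x * √(t (i + 1) - t i)} =
        1 - gaussianReal 0 1 (Ici x) := by
    have hmeas : MeasurableSet {ω | x * √(t (i + 1) - t i) ≤ B (t (i + 1)) ω - B (t i) ω} :=
      measurableSet_le measurable_const ((hB.meas _).sub (hB.meas _))
    rw [← hB.measure_mul_sqrt_le_sub (ht0 i) (ht (lt_add_one i)) x,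
      ← prob_compl_eq_one_sub hmeas]
    congr 1
    ext ω
    simp
  calc _ = ∏ i : Fin N, P {ω | B (t (i + 1)) ω - B (t i) ω < x * √(t (i + 1) - t i)} :=
        (hB.indep N t ht0 ht.monotone).meas_iInter
          fun i => ⟨Iio (x * √(t (i + 1) - t i)), measurableSet_Iio, rfl⟩
    _ = _ := by simp [hfactor]

lemma measure_iUnion_le_neg_mul_sqrt_le (hB : IsStandardBM P B) {t : ℕ → ℝ}
    (ht : ∀ i, 0 < t i) (N : ℕ) (x : ℝ) :
    P (⋃ i : Fin N, {ω | B (t i) ω ≤ -(x * √(t i))}) ≤ N * gaussianReal 0 1 (Ici x) :=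
  (measure_iUnion_fintype_le _ _).trans (by simp [hB.measure_le_neg_mul_sqrt (ht _)])

/-- The two error terms bound the probabilities that no increment of `B` over a grid interval
`[q ^ i, q ^ (i + 1)]` exceeds `m` standard deviations, and that some `B (q ^ i)` drops below
`-a √(q ^ i)`. -/
lemma measure_le_iSup_div_sqrt [IsProbabilityMeasure P] (hB : IsStandardBM P B) {q T L a m : ℝ}
    (hq : 1 < q) {N : ℕ} (hN : q ^ N ≤ T) (h : L + a / √q ≤ m * √(1 - 1 / q)) :
    1 - (1 - gaussianReal 0 1 (Ici m)) ^ N - N * gaussianReal 0 1 (Ici a) ≤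
      P {ω | L ≤ ⨆ t : Icc (1 : ℝ) T, B t ω / √t} := by
  set AllSmall := ⋂ i : Fin N, {ω | B (q ^ (i + 1 : ℕ)) ω - B (q ^ (i : ℕ)) ω <
    m * √(q ^ (i + 1 : ℕ) - q ^ (i : ℕ))}
  set SomeLow := ⋃ i : Fin N, {ω | B (q ^ (i : ℕ)) ω ≤ -(a * √(q ^ (i : ℕ)))}
  have hAllSmall : P AllSmall = (1 - gaussianReal 0 1 (Ici m)) ^ N :=
    hB.measure_iInter_sub_lt_mul_sqrt (fun i => by positivity) (pow_right_strictMono₀ hq) N m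
  have hSomeLow : P SomeLow ≤ N * gaussianReal 0 1 (Ici a) :=
    hB.measure_iUnion_le_neg_mul_sqrt_le (fun i => by positivity) N a
  have hAllSmall_meas : MeasurableSet AllSmall :=
    .iInter fun i => measurableSet_lt ((hB.meas _).sub (hB.meas _)) measurable_const
  have hincl : (AllSmallᶜ \ SomeLow : Set Ω) ≤ᵐ[P]
      {ω | L ≤ ⨆ t : Icc (1 : ℝ) T, B t ω / √t} := by
    filter_upwards [hB.cont] with ω hω ⟨hbig, hlow⟩
    obtain ⟨i, hi⟩ : ∃ i : Fin N, m * √(q ^ (i + 1 : ℕ) - q ^ (i : ℕ)) ≤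
        B (q ^ (i + 1 : ℕ)) ω - B (q ^ (i : ℕ)) ω := by
      simpa [AllSmall] using hbig
    refine le_iSup_div_sqrt_of_increment hq (hω.mono fun _ ht => zero_le_one.trans ht.1) h
      ((pow_le_pow_right₀ hq.le i.isLt).trans hN) hi ?_
    simp only [SomeLow, mem_iUnion, mem_ofPred_eq, not_exists, not_le] at hlow
    exact hlow i
  calc 1 - (1 - gaussianReal 0 1 (Ici m)) ^ N - N * gaussianReal 0 1 (Ici a)
      ≤ P AllSmallᶜ - P SomeLow := by
        rw [prob_compl_eq_one_sub hAllSmall_meas, hAllSmall]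
        gcongr
    _ ≤ P (AllSmallᶜ \ SomeLow) := le_measure_sdiff
    _ ≤ _ := measure_mono_ae hincl

end IsStandardBM

lemma exists_one_lt_add_div_sqrt_le {α β : ℝ} (c : ℝ) (hα : 0 ≤ α) (hαβ : α < β) :
    ∃ q, 1 < q ∧ √α + c / √q ≤ √β * √(1 - 1 / q) := by
  have hleft : Tendsto (fun q : ℝ => √α + c / √q) atTop (𝓝 (√α + 0)) :=
    tendsto_const_nhds.add (tendsto_const_nhds.div_atTop tendsto_sqrt_atTop)
  have hright : Tendsto (fun q : ℝ => √β * √(1 - 1 / q)) atTop (𝓝 (√β * √(1 - 0))) :=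
    tendsto_const_nhds.mul (tendsto_const_nhds.sub (tendsto_const_nhds.div_atTop tendsto_id)).sqrt
  have hlt : √α + 0 < √β * √(1 - 0) := by simpa using sqrt_lt_sqrt hα hαβ
  obtain ⟨q, hq, hlt⟩ := ((eventually_gt_atTop 1).and (hleft.eventually_lt hright hlt)).exists
  exact ⟨q, hq, hlt.le⟩

lemma pow_floor_logb_le {q x : ℝ} (hq : 1 < q) (hx : 1 ≤ x) : q ^ ⌊logb q x⌋₊ ≤ x := by
  rw [← rpow_natCast, ← le_logb_iff_rpow_le hq (by linarith)]
  exact Nat.floor_le (logb_nonneg hq hx)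

lemma eventually_floor_logb_sub_one_bounds {q : ℝ} (hq : 1 < q) :
    ∀ᶠ A in atTop, log A / (2 * log q) ≤ ⌊logb q (A - 1)⌋₊ ∧
      (⌊logb q (A - 1)⌋₊ : ℝ) ≤ log A / log q := by
  have hlogq : 0 < log q := log_pos hq
  filter_upwards [eventually_ge_atTop 2,
    tendsto_log_atTop.eventually_ge_atTop (2 * (log 2 + log q))] with A hA hlogA
  have hlogb : 0 ≤ logb q (A - 1) := logb_nonneg hq (by linarith)
  constructor
  · have hhalf : log A - log 2 ≤ log (A - 1) := by
      rw [← log_div (by positivity) two_ne_zero]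
      exact log_le_log (by positivity) (by linarith)
    have hfloor : log (A - 1) < (⌊logb q (A - 1)⌋₊ + 1) * log q := by
      rw [← div_lt_iff₀ hlogq]
      have hdef : logb q (A - 1) = log (A - 1) / log q := rfl
      linarith [Nat.sub_one_lt_floor (logb q (A - 1))]
    rw [div_le_iff₀ (by positivity)]
    linarith
  · calc (⌊logb q (A - 1)⌋₊ : ℝ) ≤ logb q (A - 1) := Nat.floor_le hlogb
      _ ≤ logb q A := logb_le_logb_of_le hq (by linarith) (by linarith)
      _ = log A / log q := rfl

lemma eventually_floor_logb_mul_gaussianReal_Ici_le {q ε : ℝ} (hq : 1 < q) (hε : 0 < ε) :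
    ∀ᶠ A in atTop,
      (⌊logb q (A - 1)⌋₊ : ℝ≥0∞) * gaussianReal 0 1 (Ici (2 * √(log (log A)))) ≤
        ENNReal.ofReal ε := by
  have hsmall : Tendsto (fun A => (log A)⁻¹ / log q) atTop (𝓝 0) := by
    simpa using (tendsto_inv_atTop_zero.comp tendsto_log_atTop).div_const (log q)
  filter_upwards [eventually_floor_logb_sub_one_bounds hq,
    tendsto_log_atTop.eventually_gt_atTop 1, hsmall.eventually (eventually_le_nhds hε)]
    with A hNbounds hlogA hε'
  obtain ⟨-, hN⟩ := hNbounds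
  set N := ⌊logb q (A - 1)⌋₊
  have hs : 0 ≤ log (log A) := log_nonneg hlogA.le
  have hexp : exp (-(2 * √(log (log A))) ^ 2 / 2) = (log A)⁻¹ * (log A)⁻¹ := by
    rw [mul_pow, sq_sqrt hs,
      show -(2 ^ 2 * log (log A)) / 2 = -log (log A) + -log (log A) by ring,
      exp_add, exp_neg, exp_log (by linarith)]
  calc (N : ℝ≥0∞) * gaussianReal 0 1 (Ici (2 * √(log (log A))))
      ≤ N * ENNReal.ofReal ((log A)⁻¹ * (log A)⁻¹) := by
        rw [← hexp]
        gcongr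
        exact gaussianReal_Ici_le_exp (by positivity)
    _ = ENNReal.ofReal (N * ((log A)⁻¹ * (log A)⁻¹)) := by
        rw [ENNReal.ofReal_mul (Nat.cast_nonneg N), ENNReal.ofReal_natCast]
    _ ≤ ENNReal.ofReal ε := by
        refine ENNReal.ofReal_le_ofReal (le_trans ?_ hε')
        calc (N : ℝ) * ((log A)⁻¹ * (log A)⁻¹)
              ≤ log A / log q * ((log A)⁻¹ * (log A)⁻¹) := by gcongr
          _ = (log A)⁻¹ / log q := by field_simp

lemma eventually_one_sub_gaussianReal_Ici_pow_le {q β ε : ℝ} (hq : 1 < q) (hβ0 : 0 ≤ β)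
    (hβ : β < 2) (hε : 0 < ε) :
    ∀ᶠ A in atTop,
      (1 - gaussianReal 0 1 (Ici √(β * log (log A)))) ^ ⌊logb q (A - 1)⌋₊ ≤
        ENNReal.ofReal ε := by
  set δ := (2 - β) / 4
  have hδ : 0 < δ := by positivity
  set γ := 1 - (1 + δ) * β / 2
  have hγ : 0 < γ := by
    simp only [γ, δ]
    nlinarith
  obtain ⟨C, hC, hCtail⟩ := exists_ofReal_exp_le_gaussianReal_Ici hδ
  have hlarge : Tendsto (fun A => C / (2 * log q) * exp (γ * log (log A))) atTop atTop :=
    (tendsto_exp_atTop.comp ((tendsto_log_atTop.comp tendsto_log_atTop).const_mul_atTop hγ)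
      ).const_mul_atTop (by have := log_pos hq; positivity)
  filter_upwards [eventually_floor_logb_sub_one_bounds hq,
    tendsto_log_atTop.eventually_gt_atTop 1, hlarge.eventually_ge_atTop (log ε⁻¹)]
    with A hNbounds hlogA hbig
  obtain ⟨hN, -⟩ := hNbounds
  set N := ⌊logb q (A - 1)⌋₊
  set s := log (log A)
  have hs : 0 ≤ s := log_nonneg hlogA.le
  set p := C * exp (-(1 + δ) * √(β * s) ^ 2 / 2)
  have hNp : log ε⁻¹ ≤ N * p := by
    have hp : p = C * exp (-(1 + δ) * β * s / 2) := by
      simp only [p]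
      rw [sq_sqrt (by positivity)]
      ring_nf
    calc log ε⁻¹ ≤ C / (2 * log q) * exp (γ * s) := hbig
      _ = log A / (2 * log q) * p := by
        rw [hp, show log A = exp s from (exp_log (by linarith)).symm,
          show γ * s = s + -(1 + δ) * β * s / 2 by ring, exp_add]
        ring
      _ ≤ N * p := by gcongr
  calc (1 - gaussianReal 0 1 (Ici √(β * s))) ^ N ≤ (1 - ENNReal.ofReal p) ^ N := by
        gcongr
        exact hCtail _ (sqrt_nonneg _)
    _ ≤ ENNReal.ofReal (exp (-(N * p))) := one_sub_ofReal_pow_le_ofReal_exp (by positivity) N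
    _ ≤ ENNReal.ofReal ε := by
        refine ENNReal.ofReal_le_ofReal ?_
        calc exp (-(N * p)) ≤ exp (-log ε⁻¹) := by gcongr
          _ = ε := by rw [log_inv, neg_neg, exp_log hε]

theorem bm_sup_ge_iterated_log {Ω : Type*} [MeasurableSpace Ω]
    (P : Measure Ω) [IsProbabilityMeasure P]
    (B : ℝ → Ω → ℝ) (hB : IsStandardBM P B)
    (η : ℝ) (hη0 : 0 < η) (hη2 : η < 2) :
    ∃ c : ℝ, 0 < c ∧ ∃ A₀ : ℝ, Real.exp 1 ≤ A₀ ∧ ∀ A : ℝ, A₀ ≤ A →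
      ENNReal.ofReal c ≤
        P {ω | Real.sqrt ((2 - η) * Real.log (Real.log A))
          ≤ ⨆ t : Set.Icc (1 : ℝ) (A - 1), B t.1 ω / Real.sqrt t.1} := by
  obtain ⟨q, hq, hratio⟩ :=
    exists_one_lt_add_div_sqrt_le 2 (by linarith : 0 ≤ 2 - η) (by linarith : 2 - η < 2 - η / 2)
  have hquarter : (0 : ℝ) < 1 / 4 := by norm_num
  have hmain : ∀ᶠ A in atTop, ENNReal.ofReal (1 / 2) ≤
      P {ω | √((2 - η) * log (log A)) ≤ ⨆ t : Icc (1 : ℝ) (A - 1), B t ω / √t} := by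
    filter_upwards [eventually_one_sub_gaussianReal_Ici_pow_le (β := 2 - η / 2) hq
        (by linarith) (by linarith) hquarter,
      eventually_floor_logb_mul_gaussianReal_Ici_le hq hquarter,
      eventually_ge_atTop 2, tendsto_log_atTop.eventually_ge_atTop 1]
      with A hnone_large hsome_low hA hlogA
    have hs : 0 ≤ log (log A) := log_nonneg hlogA
    have hthreshold : √((2 - η) * log (log A)) + 2 * √(log (log A)) / √q ≤
        √((2 - η / 2) * log (log A)) * √(1 - 1 / q) := by
      rw [sqrt_mul' _ hs, sqrt_mul' _ hs]
      calc _ = (√(2 - η) + 2 / √q) * √(log (log A)) := by ring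
        _ ≤ √(2 - η / 2) * √(1 - 1 / q) * √(log (log A)) := by gcongr
        _ = _ := by ring
    calc ENNReal.ofReal (1 / 2) = 1 - ENNReal.ofReal (1 / 4) - ENNReal.ofReal (1 / 4) := by
          rw [← ENNReal.ofReal_one, ← ENNReal.ofReal_sub _ hquarter.le,
            ← ENNReal.ofReal_sub _ hquarter.le]
          norm_num
      _ ≤ _ := by gcongr
      _ ≤ _ := hB.measure_le_iSup_div_sqrt hq (pow_floor_logb_le hq (by linarith)) hthreshold
  obtain ⟨A₁, hA₁⟩ := eventually_atTop.1 hmain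
  exact ⟨1 / 2, by norm_num, max (exp 1) A₁, le_max_left _ _,
    fun A hA => hA₁ A (le_of_max_le_right hA)⟩
end

section
/- Let (B_t)_{t≥0} be a standard Brownian motion and define the Brownian bridge β_t = B_t − t·B_1 for t ∈ [0,1]. For every η ∈ (0,2) there exists a constant c(η) > 0 such that for every ε with 0 < ε ≤ 1/e, P( sup_{ε ≤ t ≤ 1−ε} β_t/√(t(1−t)) ≥ √((2−η) log log(1/ε)) ) ≥ c(η). -/
open MeasureTheory Filter ProbabilityTheory
open scoped ENNReal NNReal

/-!
Write `ℓ = log (1 / ε)` and `a = √((2 - η) log ℓ)`. If `log ℓ` is bounded, so is `a`, and the single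
time `1 / 2` already gives `β_{1/2} / (1/2) ≥ a` with probability bounded below. Otherwise take the
geometric grid `t₁ = ε < t₂ < ⋯` of ratio `r ≥ 20` with `1 / r ≤ η / 8`. The normalized bridge
exceeds `a` at `t_{i+1}` as soon as the increment of `B` over `[t_i, t_{i+1}]` exceeds `λ` standard
deviations, `λ = (a + 3) / √(1 - 1 / r)`, while `|B_{t_i}| ≤ √t_{i+1}` and `|B_1| ≤ 2`. Each of
these independent increments succeeds with probability `p ≥ ℓ^{-(1 - η/8)} / const`, so
`K = ⌈1 / p⌉` of them, which fit into `[ε, 1]` once `ℓ` is large, give a success with probability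
`≥ 1 - 1 / e`. The side conditions fail with probability at most `2 K p e^{-r/2} + 2 e^{-2}`,
because `B_{t_i}` is independent of the increment after it; this leaves `1 / 4`.
-/

open Real Set

namespace ProbabilityTheory

lemma gaussianReal_real_eq_preimage_mul_sqrt {v : ℝ} (hv : 0 ≤ v) {S : Set ℝ}
    (hS : MeasurableSet S) :
    (gaussianReal 0 v.toNNReal).real S = (gaussianReal 0 1).real ((√v * ·) ⁻¹' S) := by
  have hvar : NNReal.mk (√v ^ 2) (sq_nonneg _) * 1 = v.toNNReal := by
    ext
    simp [sq_sqrt hv, hv]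
  have hmap := gaussianReal_map_const_mul (μ := 0) (v := 1) √v
  rw [hvar, mul_zero] at hmap
  rw [← hmap, map_measureReal_apply (by fun_prop) hS]

lemma gaussianReal_real_Iic_neg (x : ℝ) :
    (gaussianReal 0 1).real (Iic (-x)) = (gaussianReal 0 1).real (Ici x) := by
  conv_lhs => rw [← neg_zero, ← gaussianReal_map_neg, map_measureReal_apply (by fun_prop)
    measurableSet_Iic]
  congr 1
  ext y
  simp

lemma gaussianReal_real_Ici_le_exp {x : ℝ} (hx : 0 ≤ x) :
    (gaussianReal 0 1).real (Ici x) ≤ exp (-x ^ 2 / 2) := by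
  have h := measure_ge_le_exp_mul_mgf (μ := gaussianReal 0 1) (X := id) x hx
    (integrable_exp_mul_gaussianReal x)
  rw [mgf_id_gaussianReal, ← exp_add] at h
  convert h using 2
  · rfl
  · push_cast
    ring

lemma gaussianReal_real_abs_gt_le {x : ℝ} (hx : 0 ≤ x) :
    (gaussianReal 0 1).real {y | x < |y|} ≤ 2 * exp (-x ^ 2 / 2) := by
  have hsub : {y : ℝ | x < |y|} ⊆ Ici x ∪ Iic (-x) := by
    intro y hy
    rcases lt_abs.1 (show x < |y| from hy) with h | h
    · exact Or.inl h.le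
    · exact Or.inr (by simp only [mem_Iic]; linarith)
  calc (gaussianReal 0 1).real {y | x < |y|}
      ≤ (gaussianReal 0 1).real (Ici x) + (gaussianReal 0 1).real (Iic (-x)) :=
        (measureReal_mono hsub).trans (measureReal_union_le _ _)
    _ ≤ 2 * exp (-x ^ 2 / 2) := by
        rw [gaussianReal_real_Iic_neg]
        linarith [gaussianReal_real_Ici_le_exp hx]

lemma exp_neg_sq_div_sqrt_le_gaussianReal_real_Ici {x : ℝ} (hx : 0 ≤ x) :
    exp (-(x + 1) ^ 2 / 2) / √(2 * π) ≤ (gaussianReal 0 1).real (Ici x) := by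
  rw [measureReal_def, ← ENNReal.ofReal_le_iff_le_toReal (measure_ne_top _ _),
    gaussianReal_apply 0 one_ne_zero]
  calc ENNReal.ofReal (exp (-(x + 1) ^ 2 / 2) / √(2 * π))
      = ∫⁻ _ in Icc x (x + 1), ENNReal.ofReal (exp (-(x + 1) ^ 2 / 2) / √(2 * π)) := by
        simp [Real.volume_Icc]
    _ ≤ ∫⁻ y in Icc x (x + 1), gaussianPDF 0 1 y := by
        refine setLIntegral_mono (measurable_gaussianPDF 0 1) fun y ⟨hxy, hyx⟩ => ?_
        simp only [gaussianPDF, gaussianPDFReal, NNReal.coe_one, mul_one, sub_zero]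
        refine ENNReal.ofReal_le_ofReal ?_
        rw [div_eq_inv_mul]
        gcongr
        nlinarith
    _ ≤ ∫⁻ y in Ici x, gaussianPDF 0 1 y := lintegral_mono_set Icc_subset_Ici_self

lemma IndepFun.measureReal_inter_preimage_eq_mul {Ω β γ : Type*} [MeasurableSpace Ω]
    [MeasurableSpace β] [MeasurableSpace γ] {μ : Measure Ω} {f : Ω → β} {g : Ω → γ}
    (h : IndepFun f g μ) {s : Set β} {t : Set γ} (hs : MeasurableSet s) (ht : MeasurableSet t) :
    μ.real (f ⁻¹' s ∩ g ⁻¹' t) = μ.real (f ⁻¹' s) * μ.real (g ⁻¹' t) := by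
  simp only [measureReal_def, h.measure_inter_preimage_eq_mul s t hs ht, ENNReal.toReal_mul]

end ProbabilityTheory

noncomputable def normalizedBridgeSup {Ω : Type*} (B : ℝ → Ω → ℝ) (ε : ℝ) (ω : Ω) : ℝ :=
  ⨆ t : Icc ε (1 - ε), (B t.1 ω - t.1 * B 1 ω) / √(t.1 * (1 - t.1))

lemma le_normalizedBridgeSup {Ω : Type*} {B : ℝ → Ω → ℝ} {ε τ a : ℝ} {ω : Ω} (hε : 0 < ε)
    (hcont : ContinuousOn (fun t => B t ω) (Ici 0)) (hτ : τ ∈ Icc ε (1 - ε))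
    (h : a * √(τ * (1 - τ)) ≤ B τ ω - τ * B 1 ω) : a ≤ normalizedBridgeSup B ε ω := by
  have hpos : ∀ t ∈ Icc ε (1 - ε), 0 < t * (1 - t) := fun t ht =>
    mul_pos (hε.trans_le ht.1) (by linarith [ht.2])
  have hcont' : ContinuousOn (fun t => (B t ω - t * B 1 ω) / √(t * (1 - t))) (Icc ε (1 - ε)) :=
    ((hcont.mono fun t ht => hε.le.trans ht.1).sub (by fun_prop)).div (by fun_prop)
      fun t ht => (sqrt_pos.2 (hpos t ht)).ne'
  have hbdd := isCompact_Icc.bddAbove_image hcont'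
  rw [← range_domRestrict] at hbdd
  refine le_trans ?_ (le_ciSup hbdd ⟨τ, hτ⟩)
  rwa [domRestrict_apply, le_div_iff₀ (sqrt_pos.2 (hpos τ hτ))]

lemma mul_sqrt_le_of_increment_ge {a t x y z : ℝ} (ha : 0 ≤ a) (ht0 : 0 ≤ t) (ht1 : t ≤ 1)
    (hinc : (a + 3) * √t ≤ y - x) (hx : |x| ≤ √t) (hz : |z| ≤ 2) :
    a * √(t * (1 - t)) ≤ y - t * z := by
  have hsqrt : √(t * (1 - t)) ≤ √t := sqrt_le_sqrt (by nlinarith)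
  have ht : t ≤ √t := by
    rw [le_sqrt ht0 ht0]
    nlinarith
  have htz : t * z ≤ 2 * t := by nlinarith [(abs_le.1 hz).2]
  nlinarith [(abs_le.1 hx).1, mul_le_mul_of_nonneg_left hsqrt ha]

namespace IsStandardBM

variable {Ω : Type*} [MeasurableSpace Ω] {P : Measure Ω} {B : ℝ → Ω → ℝ}

lemma measurable_increment (hB : IsStandardBM P B) (s t : ℝ) :
    Measurable fun ω => B t ω - B s ω :=
  (hB.meas t).sub (hB.meas s)

lemma measureReal_increment_preimage (hB : IsStandardBM P B) {s t : ℝ} (hs : 0 ≤ s)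
    (hst : s ≤ t) {S : Set ℝ} (hS : MeasurableSet S) :
    P.real ((fun ω => B t ω - B s ω) ⁻¹' S) = (gaussianReal 0 1).real ((√(t - s) * ·) ⁻¹' S) := by
  rw [← map_measureReal_apply (hB.measurable_increment s t) hS, hB.incr s t hs hst,
    gaussianReal_real_eq_preimage_mul_sqrt (sub_nonneg.2 hst) hS]

lemma indepFun_increments (hB : IsStandardBM P B) {r s t : ℝ} (hr : 0 ≤ r) (hrs : r ≤ s)
    (hst : s ≤ t) : IndepFun (fun ω => B s ω - B r ω) (fun ω => B t ω - B s ω) P := by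
  have hmono : Monotone fun j : ℕ => if j = 0 then r else if j = 1 then s else t := by
    refine monotone_nat_of_le_succ fun n => ?_
    rcases n with _ | _ | n <;> simp [hrs, hst]
  simpa using (hB.indep 2 _ (fun j => by split_ifs <;> linarith) hmono).indepFun
    (i := (0 : Fin 2)) (j := 1) (by decide)

lemma measureReal_abs_increment_gt_le (hB : IsStandardBM P B) {s t x : ℝ} (hs : 0 ≤ s)
    (hst : s ≤ t) (hx : 0 ≤ x) :
    P.real {ω | x * √(t - s) < |B t ω - B s ω|} ≤ 2 * exp (-x ^ 2 / 2) := by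
  calc P.real {ω | x * √(t - s) < |B t ω - B s ω|}
      = (gaussianReal 0 1).real ((√(t - s) * ·) ⁻¹' {y | x * √(t - s) < |y|}) :=
        hB.measureReal_increment_preimage hs hst (measurableSet_lt measurable_const measurable_abs)
    _ ≤ (gaussianReal 0 1).real {y | x < |y|} := by
        refine measureReal_mono fun y (hy : x * √(t - s) < |√(t - s) * y|) => ?_
        rw [abs_mul, abs_of_nonneg (sqrt_nonneg _), mul_comm] at hy
        exact lt_of_mul_lt_mul_left hy (sqrt_nonneg _)
    _ ≤ 2 * exp (-x ^ 2 / 2) := gaussianReal_real_abs_gt_le hx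

lemma measureReal_increment_ge (hB : IsStandardBM P B) {s t : ℝ} (hs : 0 ≤ s) (hst : s < t)
    (lam : ℝ) :
    P.real {ω | lam * √(t - s) ≤ B t ω - B s ω} = (gaussianReal 0 1).real (Ici lam) := by
  have hd : 0 < √(t - s) := sqrt_pos.2 (sub_pos.2 hst)
  change P.real ((fun ω => B t ω - B s ω) ⁻¹' Ici (lam * √(t - s))) = _
  rw [hB.measureReal_increment_preimage hs hst.le measurableSet_Ici]
  congr 1
  ext y
  simp [mul_comm lam, mul_le_mul_iff_right₀ hd]

lemma measureReal_increment_ge_inter_abs_gt_le (hB : IsStandardBM P B) {s t x : ℝ} (hs : 0 ≤ s)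
    (hst : s < t) (hx : 0 ≤ x) (lam : ℝ) :
    P.real ({ω | lam * √(t - s) ≤ B t ω - B s ω} ∩ {ω | x * √s < |B s ω - B 0 ω|}) ≤
      (gaussianReal 0 1).real (Ici lam) * (2 * exp (-x ^ 2 / 2)) := by
  change P.real ((fun ω => B t ω - B s ω) ⁻¹' Ici (lam * √(t - s)) ∩
    (fun ω => B s ω - B 0 ω) ⁻¹' {y | x * √s < |y|}) ≤ _
  rw [(hB.indepFun_increments le_rfl hs hst.le).symm.measureReal_inter_preimage_eq_mul
    measurableSet_Ici (measurableSet_lt measurable_const measurable_abs)]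
  gcongr
  · exact (hB.measureReal_increment_ge hs hst lam).le
  · simpa using hB.measureReal_abs_increment_gt_le le_rfl hs hx

lemma measureReal_le_measureReal_normalizedBridgeSup_ge [IsFiniteMeasure P]
    (hB : IsStandardBM P B) {ε a : ℝ} (hε : 0 < ε) {E : Set Ω}
    (hE : ∀ ω ∈ E, B 0 ω = 0 →
      ∃ τ ∈ Icc ε (1 - ε), a * √(τ * (1 - τ)) ≤ B τ ω - τ * B 1 ω) :
    P.real E ≤ P.real {ω | a ≤ normalizedBridgeSup B ε ω} := by
  calc P.real E = P.real (E ∩ {ω | ContinuousOn (fun t => B t ω) (Ici 0) ∧ B 0 ω = 0}) :=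
        measureReal_congr (inter_ae_eq_left_of_ae_eq_univ
          (eventuallyEq_univ.2 (hB.cont.and hB.start))).symm
    _ ≤ P.real {ω | a ≤ normalizedBridgeSup B ε ω} := by
        refine measureReal_mono fun ω ⟨hωE, hcont, h0⟩ => ?_
        obtain ⟨τ, hτ, h⟩ := hE ω hωE h0
        exact le_normalizedBridgeSup hε hcont hτ h

variable [IsProbabilityMeasure P]

lemma measureReal_iUnion_increment_ge (hB : IsStandardBM P B) {t : ℕ → ℝ} (ht0 : 0 ≤ t 0)
    (ht : StrictMono t) (K : ℕ) (lam : ℝ) :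
    P.real (⋃ i : Fin K, {ω | lam * √(t (i + 1) - t i) ≤ B (t (i + 1)) ω - B (t i) ω}) =
      1 - (1 - (gaussianReal 0 1).real (Ici lam)) ^ K := by
  set Δ : Fin K → Ω → ℝ := fun i ω => B (t (i + 1)) ω - B (t i) ω
  set c : Fin K → ℝ := fun i => lam * √(t (i + 1) - t i)
  have hnonneg : ∀ j, 0 ≤ t j := fun j => ht0.trans (ht.monotone (Nat.zero_le j))
  have hsmall : ∀ i, P.real (Δ i ⁻¹' Iio (c i)) = 1 - (gaussianReal 0 1).real (Ici lam) := by
    intro i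
    rw [← hB.measureReal_increment_ge (hnonneg i) (ht (Nat.lt_add_one i)) lam, ← compl_Ici,
      preimage_compl, probReal_compl_eq_one_sub (hB.measurable_increment _ _ measurableSet_Ici)]
    rfl
  have hunion : (⋃ i : Fin K, {ω | c i ≤ Δ i ω}) = (⋂ i, Δ i ⁻¹' Iio (c i))ᶜ := by
    ext ω
    simp only [mem_iUnion, mem_ofPred_eq, mem_compl_iff, mem_iInter, mem_preimage, mem_Iio,
      not_forall, not_lt]
  have hinter : P.real (⋂ i, Δ i ⁻¹' Iio (c i)) = (1 - (gaussianReal 0 1).real (Ici lam)) ^ K := by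
    rw [measureReal_def, (hB.indep K t hnonneg ht.monotone).meas_iInter
      fun i => ⟨_, measurableSet_Iio, rfl⟩, ENNReal.toReal_prod]
    exact (Finset.prod_congr rfl fun i _ => hsmall i).trans (by simp)
  change P.real (⋃ i : Fin K, {ω | c i ≤ Δ i ω}) = _
  rw [hunion, probReal_compl_eq_one_sub (s := ⋂ i, Δ i ⁻¹' Iio (c i))
    (.iInter fun i => hB.measurable_increment _ _ measurableSet_Iio), hinter]

lemma gaussianReal_tail_mul_le_measureReal_normalizedBridgeSup_ge (hB : IsStandardBM P B)
    {ε a M : ℝ} (hε : 0 < ε) (hε2 : ε ≤ 1 / 2) (ha : 0 ≤ a) (haM : a ≤ M) :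
    (gaussianReal 0 1).real (Ici (2 * M)) * (gaussianReal 0 1).real (Ici 0) ≤
      P.real {ω | a ≤ normalizedBridgeSup B ε ω} := by
  -- `β_{1/2} / √(1/2 · 1/2) = (B_{1/2} - B_0) - (B_1 - B_{1/2})` when `B_0 = 0`.
  have hX : (gaussianReal 0 1).real (Ici (2 * M)) ≤ P.real {ω | a ≤ B (1 / 2) ω - B 0 ω} := by
    change _ ≤ P.real ((fun ω => B (1 / 2) ω - B 0 ω) ⁻¹' Ici a)
    rw [hB.measureReal_increment_preimage le_rfl (by norm_num) measurableSet_Ici, sub_zero]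
    refine measureReal_mono fun y (hy : 2 * M ≤ y) => ?_
    have : 1 / 2 ≤ √(1 / 2) := by rw [le_sqrt] <;> norm_num
    show a ≤ √(1 / 2) * y
    nlinarith
  have hY : (gaussianReal 0 1).real (Ici 0) = P.real {ω | B 1 ω - B (1 / 2) ω ≤ 0} := by
    change _ = P.real ((fun ω => B 1 ω - B (1 / 2) ω) ⁻¹' Iic 0)
    rw [hB.measureReal_increment_preimage (by norm_num) (by norm_num) measurableSet_Iic,
      ← gaussianReal_real_Iic_neg, neg_zero]
    have hd : 0 < √(1 - 1 / 2 : ℝ) := by positivity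
    congr 1
    ext y
    simp only [mem_preimage, mem_Iic]
    constructor <;> intro h <;> nlinarith
  have hindep := (hB.indepFun_increments le_rfl (by norm_num : (0 : ℝ) ≤ 1 / 2)
    (by norm_num : (1 / 2 : ℝ) ≤ 1)).measureReal_inter_preimage_eq_mul
      (measurableSet_Ici (a := a)) (measurableSet_Iic (a := (0 : ℝ)))
  have hsqrt : √(1 / 2 * (1 - 1 / 2) : ℝ) = 1 / 2 := by
    rw [show (1 / 2 * (1 - 1 / 2) : ℝ) = (1 / 2) ^ 2 by norm_num, sqrt_sq (by norm_num)]
  calc (gaussianReal 0 1).real (Ici (2 * M)) * (gaussianReal 0 1).real (Ici 0)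
      ≤ P.real {ω | a ≤ B (1 / 2) ω - B 0 ω} * P.real {ω | B 1 ω - B (1 / 2) ω ≤ 0} := by
        rw [hY]
        gcongr
    _ = P.real ({ω | a ≤ B (1 / 2) ω - B 0 ω} ∩ {ω | B 1 ω - B (1 / 2) ω ≤ 0}) := hindep.symm
    _ ≤ P.real {ω | a ≤ normalizedBridgeSup B ε ω} := by
        refine hB.measureReal_le_measureReal_normalizedBridgeSup_ge hε
          fun ω ⟨(hX : a ≤ _), (hY : _ ≤ (0 : ℝ))⟩ h0 => ⟨1 / 2, ⟨by norm_num; linarith, ?_⟩, ?_⟩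
        · linarith
        · rw [hsqrt]
          linarith

lemma le_measureReal_large_increment_of_geometric (hB : IsStandardBM P B) {t : ℕ → ℝ} {r : ℝ}
    (ht0 : 0 < t 0) (hr : 1 < r) (ht : ∀ j, t (j + 1) = r * t j) (K : ℕ) (lam : ℝ) :
    1 - exp (-((gaussianReal 0 1).real (Ici lam) * K))
        - (gaussianReal 0 1).real (Ici lam) * K * (2 * exp (-(r / 2))) - 2 * exp (-2) ≤
      P.real ((⋃ i : Fin K, {ω | lam * √(t (i + 1) - t i) ≤ B (t (i + 1)) ω - B (t i) ω} ∩
        {ω | |B (t i) ω - B 0 ω| ≤ √(t (i + 1))}) ∩ {ω | |B 1 ω - B 0 ω| ≤ 2}) := by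
  set p := (gaussianReal 0 1).real (Ici lam)
  set A : Fin K → Set Ω := fun i => {ω | lam * √(t (i + 1) - t i) ≤ B (t (i + 1)) ω - B (t i) ω}
  set C : Fin K → Set Ω := fun i => {ω | √r * √(t i) < |B (t i) ω - B 0 ω|}
  set D : Set Ω := {ω | 2 < |B 1 ω - B 0 ω|}
  have hpos : ∀ j, 0 < t j := Nat.rec ht0 fun j hj => by rw [ht]; positivity
  have hmono : StrictMono t := strictMono_nat_of_lt_succ fun j => by rw [ht j]; nlinarith [hpos j]
  have hsqrt : ∀ j, √r * √(t j) = √(t (j + 1)) := fun j => by rw [ht, sqrt_mul (by linarith)]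
  set G := (⋃ i, A i ∩ {ω | |B (t i) ω - B 0 ω| ≤ √(t (i + 1))}) ∩ {ω | |B 1 ω - B 0 ω| ≤ 2}
  have hcover : (⋃ i, A i) ⊆ G ∪ (⋃ i, A i ∩ C i) ∪ D := by
    intro ω hω
    obtain ⟨i, hi⟩ := mem_iUnion.1 hω
    by_cases hC : ω ∈ C i
    · exact Or.inl (Or.inr (mem_iUnion.2 ⟨i, hi, hC⟩))
    by_cases hD : ω ∈ D
    · exact Or.inr hD
    refine Or.inl (Or.inl ⟨mem_iUnion.2 ⟨i, hi, ?_⟩, ?_⟩)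
    · simpa [C, hsqrt] using hC
    · simpa [D] using hD
  have hU : 1 - exp (-(p * K)) ≤ P.real (⋃ i, A i) := by
    rw [hB.measureReal_iUnion_increment_ge ht0.le hmono K lam]
    have : (1 - p) ^ K ≤ exp (-(p * K)) :=
      calc (1 - p) ^ K ≤ exp (-p) ^ K :=
            pow_le_pow_left₀ (sub_nonneg.2 measureReal_le_one) (one_sub_le_exp_neg p) K
        _ = exp (-(p * K)) := by rw [← exp_nat_mul]; ring_nf
    linarith
  have hC : P.real (⋃ i, A i ∩ C i) ≤ p * K * (2 * exp (-(r / 2))) := by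
    calc P.real (⋃ i, A i ∩ C i) ≤ ∑ i, P.real (A i ∩ C i) := measureReal_iUnion_fintype_le _
      _ ≤ ∑ i : Fin K, p * (2 * exp (-√r ^ 2 / 2)) := Finset.sum_le_sum fun i _ =>
          hB.measureReal_increment_ge_inter_abs_gt_le (hpos i).le (hmono (Nat.lt_add_one i))
            (sqrt_nonneg r) lam
      _ = p * K * (2 * exp (-(r / 2))) := by
          rw [sq_sqrt (by linarith), Finset.sum_const, Finset.card_univ, Fintype.card_fin,
            nsmul_eq_mul, neg_div]
          ring
  have hD : P.real D ≤ 2 * exp (-2) := by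
    have := hB.measureReal_abs_increment_gt_le le_rfl zero_le_one zero_le_two
    norm_num at this
    exact this
  linarith [measureReal_mono (μ := P) hcover, measureReal_union_le (μ := P) (G ∪ ⋃ i, A i ∩ C i) D,
    measureReal_union_le (μ := P) G (⋃ i, A i ∩ C i)]

lemma quarter_le_measureReal_normalizedBridgeSup_ge (hB : IsStandardBM P B) {ε a r lam : ℝ}
    {K : ℕ} (hε : 0 < ε) (ha : 0 ≤ a) (hr : 20 ≤ r) (hK : ε * r ^ K ≤ 1)
    (hlam : lam * √(1 - r⁻¹) = a + 3) (hpK : 1 ≤ (gaussianReal 0 1).real (Ici lam) * K)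
    (hpK' : (gaussianReal 0 1).real (Ici lam) * K ≤ 2) :
    1 / 4 ≤ P.real {ω | a ≤ normalizedBridgeSup B ε ω} := by
  set t : ℕ → ℝ := fun j => ε / r * r ^ j
  have ht : ∀ j, t (j + 1) = r * t j := fun j => by simp only [t, pow_succ]; ring
  have hpos : ∀ j, 0 < t j := fun j => by positivity
  have hmem : ∀ i : Fin K, t (i + 1) ∈ Icc ε (1 / 20) := by
    intro i
    have h1 : t (i + 1) = ε * r ^ (i : ℕ) := by
      simp only [t, pow_succ]
      field_simp
    have h2 : r * t (i + 1) ≤ 1 :=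
      calc r * t (i + 1) = ε * r ^ ((i : ℕ) + 1) := by rw [h1, pow_succ]; ring
        _ ≤ ε * r ^ K := by gcongr; linarith; omega
        _ ≤ 1 := hK
    refine ⟨h1 ▸ le_mul_of_one_le_right hε.le (one_le_pow₀ (by linarith)), ?_⟩
    nlinarith [hpos (i + 1)]
  have hinc : ∀ i : Fin K, lam * √(t (i + 1) - t i) = (a + 3) * √(t (i + 1)) := by
    intro i
    have hsub : t (i + 1) - t i = t (i + 1) * (1 - r⁻¹) := by
      rw [ht]
      field_simp
    rw [hsub, sqrt_mul (hpos _).le, ← hlam]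
    ring
  have hnum : exp (-1) + 2 * (2 * exp (-(r / 2))) + 2 * exp (-2) ≤ 3 / 4 := by
    have he := exp_neg_one_lt_d9
    have he2 : exp (-2) = exp (-1) ^ 2 := by rw [← exp_nat_mul]; norm_num
    have he4 : exp (-(r / 2)) ≤ exp (-1) ^ 4 := by
      rw [← exp_nat_mul]
      exact exp_le_exp.2 (by push_cast; linarith)
    nlinarith [pow_le_pow_left₀ (exp_pos (-1)).le he.le 2,
      pow_le_pow_left₀ (exp_pos (-1)).le he.le 4]
  have hgood := hB.le_measureReal_large_increment_of_geometric (hpos 0) (by linarith) ht K lam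
  have hexp : exp (-((gaussianReal 0 1).real (Ici lam) * K)) ≤ exp (-1) :=
    exp_le_exp.2 (by linarith)
  have hbad : (gaussianReal 0 1).real (Ici lam) * K * (2 * exp (-(r / 2))) ≤
      2 * (2 * exp (-(r / 2))) := by gcongr
  refine le_trans (by linarith) (hgood.trans
    (hB.measureReal_le_measureReal_normalizedBridgeSup_ge hε ?_))
  rintro ω ⟨hω, hD⟩ h0
  obtain ⟨i, hA, hC⟩ := mem_iUnion.1 hω
  refine ⟨t (i + 1), ⟨(hmem i).1, by linarith [(hmem i).1, (hmem i).2]⟩, ?_⟩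
  refine mul_sqrt_le_of_increment_ge ha (hpos _).le (by linarith [(hmem i).2])
    ((hinc i).symm.trans_le hA) ?_ ?_
  · simpa [h0] using hC
  · simpa [h0] using hD

end IsStandardBM

lemma sq_div_sqrt_add_one_le {η L q : ℝ} (hη0 : 0 < η) (hη2 : η < 2) (hL : 0 ≤ L)
    (hq0 : 0 ≤ q) (hq : q ≤ η / 8) :
    ((√((2 - η) * L) + 3) / √(1 - q) + 1) ^ 2 / 2 ≤ (1 - η / 8) * L + (96 / η + 12) := by
  set a := √((2 - η) * L)
  have ha : 0 ≤ a := sqrt_nonneg _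
  have ha2 : a ^ 2 = (2 - η) * L := sq_sqrt (mul_nonneg (by linarith) hL)
  have hq1 : 0 < 1 - q := by linarith
  have hs : 0 < √(1 - q) := sqrt_pos.2 hq1
  have hs1 : √(1 - q) ≤ 1 := sqrt_le_one.2 (by linarith)
  have hlam : ((a + 3) / √(1 - q) + 1) ^ 2 ≤ (a + 4) ^ 2 * (1 - q)⁻¹ := by
    have hle : (a + 3) / √(1 - q) + 1 ≤ (a + 4) / √(1 - q) := by
      rw [div_add_one hs.ne']
      exact div_le_div_of_nonneg_right (by linarith) hs.le
    calc ((a + 3) / √(1 - q) + 1) ^ 2 ≤ ((a + 4) / √(1 - q)) ^ 2 := by gcongr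
      _ = (a + 4) ^ 2 * (1 - q)⁻¹ := by rw [div_pow, sq_sqrt hq1.le, div_eq_mul_inv]
  have hyoung : 8 * a ≤ η / 8 * a ^ 2 + 128 / η := by
    have : η / 8 * a ^ 2 + 128 / η - 8 * a = η / 8 * (a - 32 / η) ^ 2 := by
      field_simp
      ring
    nlinarith [this, mul_nonneg (by positivity : 0 ≤ η / 8) (sq_nonneg (a - 32 / η))]
  have hinv : (1 - q)⁻¹ ≤ 1 + η / 4 := by
    rw [inv_le_iff_one_le_mul₀ hq1]
    nlinarith
  have hY : 0 ≤ 128 / η + 16 := by positivity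
  have hX : (1 + η / 8) * a ^ 2 * (1 + η / 4) ≤ (2 - η / 4) * L := by
    rw [ha2]
    nlinarith [mul_nonneg (mul_nonneg hη0.le hη0.le) hL, mul_nonneg (pow_nonneg hη0.le 3) hL]
  have hsq : (a + 4) ^ 2 ≤ (1 + η / 8) * a ^ 2 + (128 / η + 16) := by nlinarith
  calc ((a + 3) / √(1 - q) + 1) ^ 2 / 2 ≤ (a + 4) ^ 2 * (1 + η / 4) / 2 := by
        gcongr
        exact hlam.trans (mul_le_mul_of_nonneg_left hinv (sq_nonneg _))
    _ ≤ ((1 + η / 8) * a ^ 2 + (128 / η + 16)) * (1 + η / 4) / 2 := by gcongr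
    _ ≤ ((2 - η / 4) * L + (128 / η + 16) * (3 / 2)) / 2 := by
        nlinarith [mul_le_mul_of_nonneg_left (by linarith : 1 + η / 4 ≤ 3 / 2) hY]
    _ = (1 - η / 8) * L + (96 / η + 12) := by ring

lemma mul_natCeil_one_div_mem_Icc {p : ℝ} (hp0 : 0 < p) (hp1 : p ≤ 1) :
    p * ⌈1 / p⌉₊ ∈ Icc (1 : ℝ) 2 := by
  constructor
  · rw [← div_le_iff₀' hp0]
    exact Nat.le_ceil _
  · have := Nat.ceil_lt_add_one (one_div_pos.2 hp0).le
    nlinarith [mul_lt_mul_of_pos_left this hp0, mul_one_div_cancel hp0.ne']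

lemma exp_neg_exp_mul_pow_natCeil_one_div_le_one {η C r L p : ℝ} (hη : 0 < η) (hη8 : η ≤ 8)
    (hr : 1 < r) (hL : 0 ≤ L) (hp : exp (-((1 - η / 8) * L + C)) / √(2 * π) ≤ p)
    (hL₀ : 8 / η * log ((√(2 * π) * exp C + 1) * log r) ≤ L) :
    exp (-exp L) * r ^ ⌈1 / p⌉₊ ≤ 1 := by
  have hp0 : 0 < p := lt_of_lt_of_le (by positivity) hp
  have hlogr : 0 < log r := log_pos hr
  set E := exp ((1 - η / 8) * L)
  have hE : 1 ≤ E := one_le_exp (by nlinarith)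
  have hinv : 1 / p ≤ √(2 * π) * exp C * E := by
    have hone : exp (-((1 - η / 8) * L + C)) * (exp C * E) = 1 := by
      rw [← exp_add, ← exp_add, ← exp_zero]
      ring_nf
    rw [div_le_iff₀ (by positivity)] at hp
    rw [div_le_iff₀ hp0]
    nlinarith [mul_le_mul_of_nonneg_right hp (by positivity : 0 ≤ exp C * E)]
  have hK : (⌈1 / p⌉₊ : ℝ) ≤ (√(2 * π) * exp C + 1) * E := by
    have := Nat.ceil_lt_add_one (one_div_pos.2 hp0).le
    nlinarith
  have hcoef : (√(2 * π) * exp C + 1) * log r ≤ exp (η / 8 * L) := by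
    rw [← exp_log (by positivity : 0 < (√(2 * π) * exp C + 1) * log r)]
    exact exp_le_exp.2 (by rw [div_mul_eq_mul_div, div_le_iff₀ hη] at hL₀; linarith)
  have hexp : exp (η / 8 * L) * E = exp L := by rw [← exp_add]; ring_nf
  rw [← exp_log (by positivity : 0 < r), ← exp_nat_mul, ← exp_add, exp_le_one_iff]
  nlinarith

theorem bridge_sup_ge_iterated_log {Ω : Type*} [MeasurableSpace Ω]
    (P : Measure Ω) [IsProbabilityMeasure P]
    (B : ℝ → Ω → ℝ) (hB : IsStandardBM P B)
    (η : ℝ) (hη0 : 0 < η) (hη2 : η < 2) :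
    ∃ c : ℝ, 0 < c ∧ ∀ ε : ℝ, 0 < ε → ε ≤ Real.exp (-1) →
      ENNReal.ofReal c ≤
        P {ω | Real.sqrt ((2 - η) * Real.log (Real.log (1 / ε)))
          ≤ ⨆ t : Set.Icc ε (1 - ε),
              (B t.1 ω - t.1 * B 1 ω) / Real.sqrt (t.1 * (1 - t.1))} := by
  set r := 20 + 8 / η
  set C := 96 / η + 12
  set L₀ := 8 / η * log ((√(2 * π) * exp C + 1) * log r)
  set M := √(2 * L₀)
  have htail : ∀ x, 0 ≤ x → 0 < (gaussianReal 0 1).real (Ici x) := fun x hx =>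
    (by positivity : (0 : ℝ) < _).trans_le (exp_neg_sq_div_sqrt_le_gaussianReal_real_Ici hx)
  refine ⟨min (1 / 4) ((gaussianReal 0 1).real (Ici (2 * M)) * (gaussianReal 0 1).real (Ici 0)),
    lt_min (by norm_num) (mul_pos (htail _ (by positivity)) (htail 0 le_rfl)), fun ε hε hεe => ?_⟩
  rw [ENNReal.ofReal_le_iff_le_toReal (measure_ne_top _ _)]
  set L := log (log (1 / ε))
  have hℓ : 1 ≤ log (1 / ε) := by
    rw [one_div, log_inv, le_neg, ← log_exp (-1)]
    exact log_le_log hε hεe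
  have hL : 0 ≤ L := log_nonneg hℓ
  change _ ≤ P.real {ω | √((2 - η) * L) ≤ normalizedBridgeSup B ε ω}
  rcases le_or_gt L L₀ with hLL₀ | hLL₀
  · refine (min_le_right _ _).trans (hB.gaussianReal_tail_mul_le_measureReal_normalizedBridgeSup_ge
      hε ?_ (sqrt_nonneg _) (sqrt_le_sqrt (by nlinarith)))
    linarith [exp_neg_one_lt_half]
  set lam := (√((2 - η) * L) + 3) / √(1 - r⁻¹)
  have hr20 : 20 ≤ r := le_add_of_nonneg_right (by positivity)
  have hr8 : r⁻¹ ≤ η / 8 := by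
    rw [inv_le_comm₀ (by positivity) (by positivity), inv_div]
    linarith
  have hp : exp (-((1 - η / 8) * L + C)) / √(2 * π) ≤ (gaussianReal 0 1).real (Ici lam) := by
    refine le_trans ?_ (exp_neg_sq_div_sqrt_le_gaussianReal_real_Ici (by positivity))
    gcongr
    linarith [sq_div_sqrt_add_one_le hη0 hη2 hL (by positivity) hr8]
  obtain ⟨hpK, hpK'⟩ := mul_natCeil_one_div_mem_Icc (htail lam (by positivity)) measureReal_le_one
  refine (min_le_left _ _).trans (hB.quarter_le_measureReal_normalizedBridgeSup_ge hε
    (sqrt_nonneg _) hr20 ?_ ?_ hpK hpK')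
  · have hεL : ε = exp (-exp L) := by
      rw [exp_log (by linarith), one_div, log_inv, neg_neg, exp_log hε]
    rw [hεL]
    exact exp_neg_exp_mul_pow_natCeil_one_div_le_one hη0 (by linarith) (by linarith) hL hp hLL₀.le
  · exact div_mul_cancel₀ _ (sqrt_pos.2 (by linarith)).ne'
end
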